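/- arXiv:math/9501210 — 5 statements merged into one kernel-verified Lean document; each statement's English description precedes it below -/
import Mathlib

section
/- For any two nonempty compact sets A₁, A₂ in ℝⁿ, the Lebesgue measure satisfies |A₁ + A₂|^(1/n) ≥ |A₁|^(1/n) + |A₂|^(1/n), where A₁ + A₂ is the Minkowski sum. -/
set_option maxHeartbeats 1000000

open MeasureTheory Set Pointwise

namespace BM

variable {n : ℕ}

/-- Interpretation of a pair of corner functions as a half-open box. -/
def I (p : (Fin n → ℝ) × (Fin n → ℝ)) : Set (Fin n → ℝ) :=
  Set.pi Set.univ fun i => Set.Ico (p.1 i) (p.2 i)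

def Nondeg (p : (Fin n → ℝ) × (Fin n → ℝ)) : Prop := ∀ i, p.1 i < p.2 i

noncomputable instance (p : (Fin n → ℝ) × (Fin n → ℝ)) : Decidable (Nondeg p) := by
  unfold Nondeg; exact Classical.dec _

lemma I_measurable (p : (Fin n → ℝ) × (Fin n → ℝ)) : MeasurableSet (I p) :=
  MeasurableSet.univ_pi fun i => measurableSet_Ico

lemma vol_I (p : (Fin n → ℝ) × (Fin n → ℝ)) :
    volume (I p) = ∏ i, ENNReal.ofReal (p.2 i - p.1 i) := by
  rw [I, volume_pi_pi]
  simp [Real.volume_Ico]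

lemma vol_I_ne_top (p : (Fin n → ℝ) × (Fin n → ℝ)) : volume (I p) ≠ ⊤ := by
  rw [vol_I]
  exact (ENNReal.prod_lt_top fun i _ => ENNReal.ofReal_lt_top).ne

lemma vol_I_toReal (p : (Fin n → ℝ) × (Fin n → ℝ)) (hp : Nondeg p) :
    (volume (I p)).toReal = ∏ i, (p.2 i - p.1 i) := by
  rw [vol_I, ENNReal.toReal_prod]
  exact Finset.prod_congr rfl fun i _ => ENNReal.toReal_ofReal (sub_nonneg.2 (hp i).le)

lemma vol_I_pos (p : (Fin n → ℝ) × (Fin n → ℝ)) (hp : Nondeg p) :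
    0 < (volume (I p)).toReal := by
  rw [vol_I_toReal p hp]
  exact Finset.prod_pos fun i _ => sub_pos.2 (hp i)

/-- Sum of two half-open intervals. -/
lemma Ico_add_Ico {a b c d : ℝ} (hab : a < b) (hcd : c < d) :
    Set.Ico a b + Set.Ico c d = Set.Ico (a + c) (b + d) := by
  apply Subset.antisymm
  · rintro x ⟨y, hy, z, hz, rfl⟩
    exact ⟨add_le_add hy.1 hz.1, add_lt_add hy.2 hz.2⟩
  intro x hx
  rcases lt_or_ge x (b + c) with h | h
  · exact ⟨x - c, ⟨le_sub_iff_add_le.2 (by linarith [hx.1]), sub_lt_iff_lt_add.2 (by linarith)⟩,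
      c, ⟨le_refl c, hcd⟩, by ring⟩
  · refine ⟨max a ((b + x - d) / 2), ⟨le_max_left _ _, ?_⟩,
      x - max a ((b + x - d) / 2), ⟨?_, ?_⟩, by ring⟩
    · rcases max_cases a ((b + x - d) / 2) with ⟨he, _⟩ | ⟨he, _⟩ <;> rw [he]
      · linarith [hx.2, le_max_right a ((b + x - d) / 2)]
      · linarith [hx.2]
    · rcases max_cases a ((b + x - d) / 2) with ⟨he, hge⟩ | ⟨he, hlt⟩ <;> rw [he] <;> linarith
    · rcases max_cases a ((b + x - d) / 2) with ⟨he, hge⟩ | ⟨he, hlt⟩ <;> rw [he] <;> linarith [hx.2]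

lemma I_add_I (p q : (Fin n → ℝ) × (Fin n → ℝ)) (hp : Nondeg p) (hq : Nondeg q) :
    I p + I q = I (p.1 + q.1, p.2 + q.2) := by
  ext x
  constructor
  · rintro ⟨y, hy, z, hz, rfl⟩ i -
    have := hy i (mem_univ i); have := hz i (mem_univ i)
    constructor
    · exact add_le_add (hy i (mem_univ i)).1 (hz i (mem_univ i)).1
    · exact add_lt_add (hy i (mem_univ i)).2 (hz i (mem_univ i)).2
  · intro hx
    have h : ∀ i, x i ∈ Set.Ico (p.1 i) (p.2 i) + Set.Ico (q.1 i) (q.2 i) := by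
      intro i
      rw [Ico_add_Ico (hp i) (hq i)]
      exact hx i (mem_univ i)
    choose y hy z hz hyz using fun i => h i
    exact ⟨y, fun i _ => hy i, z, fun i _ => hz i, funext fun i => (hyz i)⟩


-- from b.lean


variable {n : ℕ}

def U (𝒜 : Finset ((Fin n → ℝ) × (Fin n → ℝ))) : Set (Fin n → ℝ) := ⋃ p ∈ 𝒜, I p

/-- A good family: nondegenerate, pairwise disjoint boxes. -/
def Good (𝒜 : Finset ((Fin n → ℝ) × (Fin n → ℝ))) : Prop :=
  (∀ p ∈ 𝒜, Nondeg p) ∧ (∀ p ∈ 𝒜, ∀ q ∈ 𝒜, p ≠ q → Disjoint (I p) (I q))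

lemma U_measurable (𝒜 : Finset ((Fin n → ℝ) × (Fin n → ℝ))) : MeasurableSet (U 𝒜) :=
  MeasurableSet.biUnion (𝒜.countable_toSet) fun p _ => I_measurable p

lemma vol_U (𝒜 : Finset ((Fin n → ℝ) × (Fin n → ℝ))) (h : Good 𝒜) :
    volume (U 𝒜) = ∑ p ∈ 𝒜, volume (I p) := by
  exact measure_biUnion_finset (fun p hp q hq hpq => h.2 p hp q hq hpq)
    (fun p _ => I_measurable p)

lemma vol_U_ne_top (𝒜 : Finset ((Fin n → ℝ) × (Fin n → ℝ))) : volume (U 𝒜) ≠ ⊤ := by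
  refine (lt_of_le_of_lt (measure_biUnion_finset_le 𝒜 I) ?_).ne
  exact ENNReal.sum_lt_top.2 fun p _ => (vol_I_ne_top p).lt_top


-- from c.lean

variable {n : ℕ}

def lcut (i : Fin n) (t : ℝ) (p : (Fin n → ℝ) × (Fin n → ℝ)) : (Fin n → ℝ) × (Fin n → ℝ) :=
  (p.1, Function.update p.2 i (min (p.2 i) t))
def rcut (i : Fin n) (t : ℝ) (p : (Fin n → ℝ) × (Fin n → ℝ)) : (Fin n → ℝ) × (Fin n → ℝ) :=
  (Function.update p.1 i (max (p.1 i) t), p.2)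

lemma I_lcut (i : Fin n) (t : ℝ) (p : (Fin n → ℝ) × (Fin n → ℝ)) :
    I (lcut i t p) = I p ∩ {x | x i < t} := by
  ext x
  simp only [I, lcut, mem_pi, mem_univ, forall_true_left, mem_inter_iff, mem_setOf_eq, mem_Ico]
  constructor
  · intro h
    refine ⟨fun j => ?_, ?_⟩
    · rcases eq_or_ne j i with rfl | hj
      · have := h j; rw [Function.update_self] at this
        exact ⟨this.1, lt_of_lt_of_le this.2 (min_le_left _ _)⟩
      · have := h j; rwa [Function.update_of_ne hj] at this
    · have := h i; rw [Function.update_self] at this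
      exact lt_of_lt_of_le this.2 (min_le_right _ _)
  · rintro ⟨h, ht⟩ j
    rcases eq_or_ne j i with rfl | hj
    · rw [Function.update_self]; exact ⟨(h j).1, lt_min (h j).2 ht⟩
    · rw [Function.update_of_ne hj]; exact h j

lemma I_rcut (i : Fin n) (t : ℝ) (p : (Fin n → ℝ) × (Fin n → ℝ)) :
    I (rcut i t p) = I p ∩ {x | t ≤ x i} := by
  ext x
  simp only [I, rcut, mem_pi, mem_univ, forall_true_left, mem_inter_iff, mem_setOf_eq, mem_Ico]
  constructor
  · intro h
    refine ⟨fun j => ?_, ?_⟩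
    · rcases eq_or_ne j i with rfl | hj
      · have := h j; rw [Function.update_self] at this
        exact ⟨le_trans (le_max_left _ _) this.1, this.2⟩
      · have := h j; rwa [Function.update_of_ne hj] at this
    · have := h i; rw [Function.update_self] at this
      exact le_trans (le_max_right _ _) this.1
  · rintro ⟨h, ht⟩ j
    rcases eq_or_ne j i with rfl | hj
    · rw [Function.update_self]; exact ⟨max_le (h j).1 ht, (h j).2⟩
    · rw [Function.update_of_ne hj]; exact h j

/-- A degenerate box has empty interpretation. -/
lemma I_empty_of_not_nondeg {p : (Fin n → ℝ) × (Fin n → ℝ)} (h : ¬ Nondeg p) : I p = ∅ := by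
  rw [Nondeg] at h; push_neg at h
  obtain ⟨i, hi⟩ := h
  ext x
  simp only [I, mem_pi, mem_univ, forall_true_left, mem_empty_iff_false, iff_false, not_forall]
  exact ⟨i, fun hx => absurd (lt_of_le_of_lt hx.1 hx.2) (not_lt.2 hi)⟩

lemma I_nonempty_of_nondeg {p : (Fin n → ℝ) × (Fin n → ℝ)} (h : Nondeg p) : (I p).Nonempty :=
  ⟨p.1, fun i _ => ⟨le_refl _, h i⟩⟩

open Classical in
/-- Left/right family of a cut. -/
noncomputable def Lfam (i : Fin n) (t : ℝ) (𝒜 : Finset ((Fin n → ℝ) × (Fin n → ℝ))) :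
    Finset ((Fin n → ℝ) × (Fin n → ℝ)) := (𝒜.image (lcut i t)).filter Nondeg
open Classical in
noncomputable def Rfam (i : Fin n) (t : ℝ) (𝒜 : Finset ((Fin n → ℝ) × (Fin n → ℝ))) :
    Finset ((Fin n → ℝ) × (Fin n → ℝ)) := (𝒜.image (rcut i t)).filter Nondeg

lemma U_Lfam (i : Fin n) (t : ℝ) (𝒜 : Finset ((Fin n → ℝ) × (Fin n → ℝ))) :
    U (Lfam i t 𝒜) = U 𝒜 ∩ {x | x i < t} := by
  classical
  rw [U, U, iUnion₂_inter]
  apply Subset.antisymm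
  · refine iUnion₂_subset fun u hu => ?_
    rw [Lfam, Finset.mem_filter, Finset.mem_image] at hu
    obtain ⟨⟨p, hp, rfl⟩, _⟩ := hu
    rw [I_lcut]
    exact subset_iUnion₂_of_subset p hp (le_refl _)
  · refine iUnion₂_subset fun p hp => ?_
    rw [← I_lcut]
    by_cases hnd : Nondeg (lcut i t p)
    · exact subset_iUnion₂_of_subset (lcut i t p)
        (by rw [Lfam, Finset.mem_filter, Finset.mem_image]; exact ⟨⟨p, hp, rfl⟩, hnd⟩) (le_refl _)
    · rw [I_empty_of_not_nondeg hnd]; exact empty_subset _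

lemma U_Rfam (i : Fin n) (t : ℝ) (𝒜 : Finset ((Fin n → ℝ) × (Fin n → ℝ))) :
    U (Rfam i t 𝒜) = U 𝒜 ∩ {x | t ≤ x i} := by
  classical
  rw [U, U, iUnion₂_inter]
  apply Subset.antisymm
  · refine iUnion₂_subset fun u hu => ?_
    rw [Rfam, Finset.mem_filter, Finset.mem_image] at hu
    obtain ⟨⟨p, hp, rfl⟩, _⟩ := hu
    rw [I_rcut]
    exact subset_iUnion₂_of_subset p hp (le_refl _)
  · refine iUnion₂_subset fun p hp => ?_
    rw [← I_rcut]
    by_cases hnd : Nondeg (rcut i t p)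
    · exact subset_iUnion₂_of_subset (rcut i t p)
        (by rw [Rfam, Finset.mem_filter, Finset.mem_image]; exact ⟨⟨p, hp, rfl⟩, hnd⟩) (le_refl _)
    · rw [I_empty_of_not_nondeg hnd]; exact empty_subset _

lemma Good_Lfam (i : Fin n) (t : ℝ) {𝒜 : Finset ((Fin n → ℝ) × (Fin n → ℝ))} (h : Good 𝒜) :
    Good (Lfam i t 𝒜) := by
  classical
  constructor
  · intro p hp; rw [Lfam, Finset.mem_filter] at hp; exact hp.2
  · intro u hu v hv huv
    rw [Lfam, Finset.mem_filter, Finset.mem_image] at hu hv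
    obtain ⟨⟨p, hp, rfl⟩, hup⟩ := hu
    obtain ⟨⟨q, hq, rfl⟩, hvq⟩ := hv
    have hpq : p ≠ q := fun hh => huv (by rw [hh])
    have := h.2 p hp q hq hpq
    rw [I_lcut, I_lcut]
    exact this.mono inter_subset_left inter_subset_left

lemma Good_Rfam (i : Fin n) (t : ℝ) {𝒜 : Finset ((Fin n → ℝ) × (Fin n → ℝ))} (h : Good 𝒜) :
    Good (Rfam i t 𝒜) := by
  classical
  constructor
  · intro p hp; rw [Rfam, Finset.mem_filter] at hp; exact hp.2
  · intro u hu v hv huv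
    rw [Rfam, Finset.mem_filter, Finset.mem_image] at hu hv
    obtain ⟨⟨p, hp, rfl⟩, hup⟩ := hu
    obtain ⟨⟨q, hq, rfl⟩, hvq⟩ := hv
    have hpq : p ≠ q := fun hh => huv (by rw [hh])
    have := h.2 p hp q hq hpq
    rw [I_rcut, I_rcut]
    exact this.mono inter_subset_left inter_subset_left

lemma card_Lfam_le (i : Fin n) (t : ℝ) (𝒜 : Finset ((Fin n → ℝ) × (Fin n → ℝ))) :
    (Lfam i t 𝒜).card ≤ 𝒜.card := by
  classical
  exact le_trans (Finset.card_filter_le _ _) (Finset.card_image_le)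

lemma card_Rfam_le (i : Fin n) (t : ℝ) (𝒜 : Finset ((Fin n → ℝ) × (Fin n → ℝ))) :
    (Rfam i t 𝒜).card ≤ 𝒜.card := by
  classical
  exact le_trans (Finset.card_filter_le _ _) (Finset.card_image_le)

/-- If some box `Q ∈ 𝒜` lies entirely right of the cut, the left family loses a box. -/
lemma card_Lfam_lt {i : Fin n} {t : ℝ} {𝒜 : Finset ((Fin n → ℝ) × (Fin n → ℝ))}
    {Q : (Fin n → ℝ) × (Fin n → ℝ)} (hQ : Q ∈ 𝒜) (ht : t ≤ Q.1 i) :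
    (Lfam i t 𝒜).card < 𝒜.card := by
  classical
  have hsub : Lfam i t 𝒜 ⊆ (𝒜.erase Q).image (lcut i t) := by
    intro u hu
    rw [Lfam, Finset.mem_filter, Finset.mem_image] at hu
    obtain ⟨⟨p, hp, rfl⟩, hnd⟩ := hu
    have hpQ : p ≠ Q := by
      rintro rfl
      have : ¬ p.1 i < min (p.2 i) t := not_lt.2 (le_trans (min_le_right _ _) ht)
      exact absurd (by simpa [lcut, Function.update_self] using hnd i) this
    exact Finset.mem_image.2 ⟨p, Finset.mem_erase.2 ⟨hpQ, hp⟩, rfl⟩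
  calc (Lfam i t 𝒜).card ≤ ((𝒜.erase Q).image (lcut i t)).card := Finset.card_le_card hsub
    _ ≤ (𝒜.erase Q).card := Finset.card_image_le
    _ < 𝒜.card := Finset.card_erase_lt_of_mem hQ

lemma card_Rfam_lt {i : Fin n} {t : ℝ} {𝒜 : Finset ((Fin n → ℝ) × (Fin n → ℝ))}
    {P : (Fin n → ℝ) × (Fin n → ℝ)} (hP : P ∈ 𝒜) (ht : P.2 i ≤ t) :
    (Rfam i t 𝒜).card < 𝒜.card := by
  classical
  have hsub : Rfam i t 𝒜 ⊆ (𝒜.erase P).image (rcut i t) := by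
    intro u hu
    rw [Rfam, Finset.mem_filter, Finset.mem_image] at hu
    obtain ⟨⟨p, hp, rfl⟩, hnd⟩ := hu
    have hpP : p ≠ P := by
      rintro rfl
      have : ¬ max (p.1 i) t < p.2 i := not_lt.2 (le_trans ht (le_max_right _ _))
      exact absurd (by simpa [rcut, Function.update_self] using hnd i) this
    exact Finset.mem_image.2 ⟨p, Finset.mem_erase.2 ⟨hpP, hp⟩, rfl⟩
  calc (Rfam i t 𝒜).card ≤ ((𝒜.erase P).image (rcut i t)).card := Finset.card_le_card hsub
    _ ≤ (𝒜.erase P).card := Finset.card_image_le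
    _ < 𝒜.card := Finset.card_erase_lt_of_mem hP


-- from d.lean

variable {n : ℕ}

lemma vol_left_split (i : Fin n) (t : ℝ) {ℬ : Finset ((Fin n → ℝ) × (Fin n → ℝ))}
    (h : Good ℬ) :
    volume (U ℬ ∩ {x | x i < t}) = ∑ p ∈ ℬ, volume (I (lcut i t p)) := by
  have : U ℬ ∩ {x | x i < t} = ⋃ p ∈ ℬ, I (lcut i t p) := by
    rw [U, iUnion₂_inter]
    exact iUnion₂_congr fun p _ => (I_lcut i t p).symm
  rw [this]
  exact measure_biUnion_finset
    (fun p hp q hq hpq => by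
      rw [Function.onFun, I_lcut, I_lcut]
      exact (h.2 p hp q hq hpq).mono inter_subset_left inter_subset_left)
    (fun p _ => I_measurable _)

/-- The continuous left-volume function. -/
noncomputable def lvol (i : Fin n) (ℬ : Finset ((Fin n → ℝ) × (Fin n → ℝ))) (t : ℝ) : ℝ :=
  ∑ p ∈ ℬ, ∏ j, max ((lcut i t p).2 j - (lcut i t p).1 j) 0

lemma lvol_eq (i : Fin n) (ℬ : Finset ((Fin n → ℝ) × (Fin n → ℝ))) (h : Good ℬ) (t : ℝ) :
    (volume (U ℬ ∩ {x | x i < t})).toReal = lvol i ℬ t := by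
  rw [vol_left_split i t h, ENNReal.toReal_sum (fun p _ => vol_I_ne_top _)]
  refine Finset.sum_congr rfl fun p _ => ?_
  rw [vol_I, ENNReal.toReal_prod]
  exact Finset.prod_congr rfl fun j _ => ENNReal.toReal_ofReal'

lemma lvol_continuous (i : Fin n) (ℬ : Finset ((Fin n → ℝ) × (Fin n → ℝ))) :
    Continuous (lvol i ℬ) := by
  refine continuous_finset_sum _ fun p _ => continuous_finset_prod _ fun j _ => ?_
  rcases eq_or_ne j i with rfl | hj
  · simp only [lcut, Function.update_self]
    exact ((continuous_const.min continuous_id).sub continuous_const).max continuous_const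
  · simp only [lcut, Function.update_of_ne hj]
    exact continuous_const

lemma lvol_bot (i : Fin n) {ℬ : Finset ((Fin n → ℝ) × (Fin n → ℝ))} {t : ℝ}
    (ht : ∀ p ∈ ℬ, t ≤ p.1 i) : lvol i ℬ t = 0 := by
  refine Finset.sum_eq_zero fun p hp => ?_
  refine Finset.prod_eq_zero (Finset.mem_univ i) ?_
  simp only [lcut, Function.update_self]
  exact max_eq_right (by linarith [min_le_right (p.2 i) t, ht p hp])

lemma lvol_top (i : Fin n) {ℬ : Finset ((Fin n → ℝ) × (Fin n → ℝ))} (h : Good ℬ) {t : ℝ}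
    (ht : ∀ p ∈ ℬ, p.2 i ≤ t) : lvol i ℬ t = (volume (U ℬ)).toReal := by
  rw [vol_U ℬ h, ENNReal.toReal_sum (fun p _ => vol_I_ne_top _)]
  unfold lvol
  refine Finset.sum_congr rfl fun p hp => ?_
  rw [vol_I, ENNReal.toReal_prod]
  refine Finset.prod_congr rfl fun j _ => ?_
  rw [ENNReal.toReal_ofReal']
  rcases eq_or_ne j i with rfl | hj
  · simp only [lcut, Function.update_self, min_eq_left (ht p hp)]
  · simp only [lcut, Function.update_of_ne hj]


-- from e.lean


/-- AM-GM form of Brunn–Minkowski for boxes. -/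
lemma box_ineq {n : ℕ} (hn : 1 ≤ n) (x y : Fin n → ℝ) (hx : ∀ i, 0 < x i)
    (hy : ∀ i, 0 < y i) :
    (∏ i, x i) ^ ((1:ℝ)/n) + (∏ i, y i) ^ ((1:ℝ)/n) ≤ (∏ i, (x i + y i)) ^ ((1:ℝ)/n) := by
  set r : ℝ := (1:ℝ)/n with hr
  have hr0 : 0 ≤ r := by positivity
  have hs : ∀ i, 0 < x i + y i := fun i => add_pos (hx i) (hy i)
  have hw : ∑ _i : Fin n, r = 1 := by
    rw [Finset.sum_const, Finset.card_univ, Fintype.card_fin, nsmul_eq_mul, hr]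
    field_simp
  have h1 : (∏ i, x i / (x i + y i)) ^ r ≤ ∑ i, r * (x i / (x i + y i)) := by
    rw [← Real.finset_prod_rpow _ _ (fun i _ => (div_pos (hx i) (hs i)).le)]
    exact Real.geom_mean_le_arith_mean_weighted _ _ _ (fun i _ => hr0) hw
      (fun i _ => (div_pos (hx i) (hs i)).le)
  have h2 : (∏ i, y i / (x i + y i)) ^ r ≤ ∑ i, r * (y i / (x i + y i)) := by
    rw [← Real.finset_prod_rpow _ _ (fun i _ => (div_pos (hy i) (hs i)).le)]
    exact Real.geom_mean_le_arith_mean_weighted _ _ _ (fun i _ => hr0) hw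
      (fun i _ => (div_pos (hy i) (hs i)).le)
  have hsum : (∑ i, r * (x i / (x i + y i))) + (∑ i, r * (y i / (x i + y i))) = 1 := by
    rw [← Finset.sum_add_distrib, ← hw]
    refine Finset.sum_congr rfl fun i _ => ?_
    rw [← mul_add, ← add_div, div_self (hs i).ne', mul_one]
  have hP : 0 < ∏ i, (x i + y i) := Finset.prod_pos fun i _ => hs i
  have hPr : 0 < (∏ i, (x i + y i)) ^ r := Real.rpow_pos_of_pos hP r
  rw [Finset.prod_div_distrib,
    Real.div_rpow (Finset.prod_pos fun i _ => hx i).le hP.le] at h1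
  rw [Finset.prod_div_distrib,
    Real.div_rpow (Finset.prod_pos fun i _ => hy i).le hP.le] at h2
  have hfin : ((∏ i, x i) ^ r + (∏ i, y i) ^ r) / (∏ i, (x i + y i)) ^ r ≤ 1 := by
    rw [add_div]
    exact le_trans (add_le_add h1 h2) (le_of_eq hsum)
  exact (div_le_one hPr).mp hfin



-- f part


lemma U_add_U (𝒜 ℬ : Finset ((Fin n → ℝ) × (Fin n → ℝ))) :
    U 𝒜 + U ℬ = ⋃ p ∈ 𝒜, ⋃ q ∈ ℬ, (I p + I q) := by
  ext x
  simp only [U, Set.mem_add, mem_iUnion, exists_prop]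
  constructor
  · rintro ⟨y, ⟨p, hp, hy⟩, z, ⟨q, hq, hz⟩, rfl⟩
    exact ⟨p, hp, q, hq, y, hy, z, hz, rfl⟩
  · rintro ⟨p, hp, q, hq, y, hy, z, hz, rfl⟩
    exact ⟨y, ⟨p, hp, hy⟩, z, ⟨q, hq, hz⟩, rfl⟩

lemma U_add_U_measurable {𝒜 ℬ : Finset ((Fin n → ℝ) × (Fin n → ℝ))}
    (hA : ∀ p ∈ 𝒜, Nondeg p) (hB : ∀ q ∈ ℬ, Nondeg q) :
    MeasurableSet (U 𝒜 + U ℬ) := by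
  rw [U_add_U]
  refine MeasurableSet.biUnion 𝒜.countable_toSet fun p hp =>
    MeasurableSet.biUnion ℬ.countable_toSet fun q hq => ?_
  rw [I_add_I p q (hA p hp) (hB q hq)]
  exact I_measurable _

lemma vol_U_add_U_ne_top {𝒜 ℬ : Finset ((Fin n → ℝ) × (Fin n → ℝ))}
    (hA : ∀ p ∈ 𝒜, Nondeg p) (hB : ∀ q ∈ ℬ, Nondeg q) :
    volume (U 𝒜 + U ℬ) ≠ ⊤ := by
  rw [U_add_U]
  refine ne_top_of_le_ne_top ?_ (measure_biUnion_finset_le 𝒜 _)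
  refine (ENNReal.sum_lt_top.2 fun p hp => ?_).ne
  refine lt_of_le_of_lt (measure_biUnion_finset_le ℬ _) (ENNReal.sum_lt_top.2 fun q hq => ?_)
  rw [I_add_I p q (hA p hp) (hB q hq)]
  exact (vol_I_ne_top _).lt_top

lemma vol_U_pos {𝒜 : Finset ((Fin n → ℝ) × (Fin n → ℝ))} (hne : 𝒜.Nonempty)
    (hA : ∀ p ∈ 𝒜, Nondeg p) : 0 < (volume (U 𝒜)).toReal := by
  obtain ⟨p, hp⟩ := hne
  have h1 : volume (I p) ≤ volume (U 𝒜) := measure_mono (subset_biUnion_of_mem hp)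
  have := vol_I_pos p (hA p hp)
  have h2 : (volume (I p)).toReal ≤ (volume (U 𝒜)).toReal :=
    ENNReal.toReal_mono (vol_U_ne_top 𝒜) h1
  linarith

lemma nonempty_of_vol_pos {𝒜 : Finset ((Fin n → ℝ) × (Fin n → ℝ))}
    (h : 0 < (volume (U 𝒜)).toReal) : 𝒜.Nonempty := by
  rcases 𝒜.eq_empty_or_nonempty with rfl | h'
  · simp [U] at h
  · exact h'

lemma exists_sep {P Q : (Fin n → ℝ) × (Fin n → ℝ)} (hP : Nondeg P) (hQ : Nondeg Q)
    (hd : Disjoint (I P) (I Q)) : ∃ i, P.2 i ≤ Q.1 i ∨ Q.2 i ≤ P.1 i := by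
  by_contra h
  push_neg at h
  have hz : (fun i => max (P.1 i) (Q.1 i)) ∈ I P ∩ I Q := by
    constructor <;> intro i _ <;>
      exact ⟨by simp, by simp only [max_lt_iff]; exact ⟨by first | exact hP i | exact (h i).2,
        by first | exact (h i).1 | exact hQ i⟩⟩
  exact absurd (hd.ne_of_mem hz.1 hz.2 rfl) (fun hh => hh)

/-- split of volume along a hyperplane, real version -/
lemma vol_split_toReal (i : Fin n) (t : ℝ) (𝒜 : Finset ((Fin n → ℝ) × (Fin n → ℝ))) :
    (volume (U 𝒜 ∩ {x | x i < t})).toReal + (volume (U 𝒜 ∩ {x | t ≤ x i})).toReal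
      = (volume (U 𝒜)).toReal := by
  have hm : MeasurableSet {x : Fin n → ℝ | x i < t} :=
    measurableSet_lt (measurable_pi_apply i) measurable_const
  have h1 : U 𝒜 ∩ {x | t ≤ x i} = U 𝒜 \ {x | x i < t} := by
    ext x; simp [not_lt]
  rw [h1, ← ENNReal.toReal_add (ne_top_of_le_ne_top (vol_U_ne_top 𝒜)
      (measure_mono inter_subset_left))
      (ne_top_of_le_ne_top (vol_U_ne_top 𝒜) (measure_mono diff_subset)),
    measure_inter_add_diff _ hm]



/-- rpow helpers -/
lemma pow_of_rpow_le {n : ℕ} (hn : 1 ≤ n) {x y : ℝ} (hx : 0 ≤ x) (hy : 0 ≤ y)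
    (h : x ≤ y ^ ((1:ℝ)/n)) : x ^ n ≤ y := by
  have hnn : (n : ℝ) ≠ 0 := Nat.cast_ne_zero.2 (by omega)
  calc x ^ n ≤ (y ^ ((1:ℝ)/n)) ^ n := pow_le_pow_left₀ hx h n
    _ = y := by
        rw [← Real.rpow_natCast (y ^ ((1:ℝ)/n)) n, ← Real.rpow_mul hy]
        rw [one_div, inv_mul_cancel₀ hnn, Real.rpow_one]

lemma rpow_of_pow_le {n : ℕ} (hn : 1 ≤ n) {x y : ℝ} (hx : 0 ≤ x)
    (h : x ^ n ≤ y) : x ≤ y ^ ((1:ℝ)/n) := by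
  have hnn : (n : ℝ) ≠ 0 := Nat.cast_ne_zero.2 (by omega)
  calc x = (x ^ n) ^ ((1:ℝ)/n) := by
        rw [← Real.rpow_natCast x n, ← Real.rpow_mul hx, mul_one_div, div_self hnn,
          Real.rpow_one]
    _ ≤ y ^ ((1:ℝ)/n) := Real.rpow_le_rpow (pow_nonneg hx n) h (by positivity)

lemma theta_pow {n : ℕ} (hn : 1 ≤ n) {θ : ℝ} (hθ : 0 ≤ θ) :
    (θ ^ ((1:ℝ)/n)) ^ n = θ := by
  have hnn : (n : ℝ) ≠ 0 := Nat.cast_ne_zero.2 (by omega)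
  rw [← Real.rpow_natCast (θ ^ ((1:ℝ)/n)) n, ← Real.rpow_mul hθ, one_div,
    inv_mul_cancel₀ hnn, Real.rpow_one]

/-- The base case: two single boxes. -/
lemma bm_base {n : ℕ} (hn : 1 ≤ n) (P Q : (Fin n → ℝ) × (Fin n → ℝ))
    (hP : Nondeg P) (hQ : Nondeg Q) :
    (volume (I P)).toReal ^ ((1:ℝ)/n) + (volume (I Q)).toReal ^ ((1:ℝ)/n)
      ≤ (volume (I P + I Q)).toReal ^ ((1:ℝ)/n) := by
  rw [I_add_I P Q hP hQ, vol_I_toReal P hP, vol_I_toReal Q hQ,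
    vol_I_toReal _ (fun i => by
      have := hP i; have := hQ i
      show P.1 i + Q.1 i < P.2 i + Q.2 i
      linarith)]
  have : ∏ i, ((P.1 + Q.1, P.2 + Q.2).2 i - (P.1 + Q.1, P.2 + Q.2).1 i)
      = ∏ i, ((P.2 i - P.1 i) + (Q.2 i - Q.1 i)) := by
    refine Finset.prod_congr rfl fun i _ => ?_
    show P.2 i + Q.2 i - (P.1 i + Q.1 i) = _
    ring
  rw [this]
  exact box_ineq hn _ _ (fun i => sub_pos.2 (hP i)) (fun i => sub_pos.2 (hQ i))

/-- Main induction: Brunn–Minkowski for good finite families of boxes. -/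
theorem bm_fam {n : ℕ} (hn : 1 ≤ n) (N : ℕ) :
    ∀ (𝒜 ℬ : Finset ((Fin n → ℝ) × (Fin n → ℝ))), 𝒜.card + ℬ.card ≤ N →
    𝒜.Nonempty → ℬ.Nonempty → Good 𝒜 → Good ℬ →
    (volume (U 𝒜)).toReal ^ ((1:ℝ)/n) + (volume (U ℬ)).toReal ^ ((1:ℝ)/n)
      ≤ (volume (U 𝒜 + U ℬ)).toReal ^ ((1:ℝ)/n) := by
  induction N using Nat.strong_induction_on with
  | _ N IH =>
  intro 𝒜 ℬ hcard hAne hBne hGA hGB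
  -- the key step, assuming `𝒜` has at least two boxes
  have key : ∀ (𝒜 ℬ : Finset ((Fin n → ℝ) × (Fin n → ℝ))), 𝒜.card + ℬ.card ≤ N →
      ℬ.Nonempty → Good 𝒜 → Good ℬ →
      ∀ P Q, P ∈ 𝒜 → Q ∈ 𝒜 → P ≠ Q → ∀ i, P.2 i ≤ Q.1 i →
      (volume (U 𝒜)).toReal ^ ((1:ℝ)/n) + (volume (U ℬ)).toReal ^ ((1:ℝ)/n)
        ≤ (volume (U 𝒜 + U ℬ)).toReal ^ ((1:ℝ)/n) := by
    clear hcard hAne hBne hGA hGB 𝒜 ℬ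
    intro 𝒜 ℬ hcard hBne hGA hGB P Q hP hQ hPQ i hci
    classical
    set c := P.2 i with hc
    -- A-side cut families
    set AL := Lfam i c 𝒜 with hAL
    set AR := Rfam i c 𝒜 with hAR
    have hlcP : lcut i c P = P := by
      unfold lcut
      rw [← hc, min_self, Function.update_eq_self]
    have hrcQ : rcut i c Q = Q := by
      unfold rcut
      rw [max_eq_left hci, Function.update_eq_self]
    have hPA : P ∈ AL := by
      rw [hAL, Lfam, Finset.mem_filter, Finset.mem_image]
      exact ⟨⟨P, hP, hlcP⟩, hGA.1 P hP⟩
    have hQA : Q ∈ AR := by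
      rw [hAR, Rfam, Finset.mem_filter, Finset.mem_image]
      exact ⟨⟨Q, hQ, hrcQ⟩, hGA.1 Q hQ⟩
    have hUAL : U AL = U 𝒜 ∩ {x | x i < c} := U_Lfam i c 𝒜
    have hUAR : U AR = U 𝒜 ∩ {x | c ≤ x i} := U_Rfam i c 𝒜
    set a := (volume (U 𝒜)).toReal with ha
    set b := (volume (U ℬ)).toReal with hb
    set aL := (volume (U AL)).toReal with haL
    set aR := (volume (U AR)).toReal with haR
    have haLR : aL + aR = a := by
      rw [haL, haR, hUAL, hUAR]; exact vol_split_toReal i c 𝒜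
    have haL_pos : 0 < aL := vol_U_pos ⟨P, hPA⟩ (Good_Lfam i c hGA).1
    have haR_pos : 0 < aR := vol_U_pos ⟨Q, hQA⟩ (Good_Rfam i c hGA).1
    have ha_pos : 0 < a := by linarith
    have hb_pos : 0 < b := vol_U_pos hBne hGB.1
    set θ := aL / a with hθ
    have hθ0 : 0 < θ := div_pos haL_pos ha_pos
    have hθ1 : θ < 1 := (div_lt_one ha_pos).2 (by linarith)
    have haLθ : aL = θ * a := by rw [hθ]; field_simp
    have haRθ : aR = (1 - θ) * a := by rw [hθ]; field_simp; linarith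
    -- B-side: intermediate value theorem
    set t₀ := ℬ.inf' hBne (fun p => p.1 i) with ht₀
    set t₁ := ℬ.sup' hBne (fun p => p.2 i) with ht₁
    have ht01 : t₀ ≤ t₁ := by
      obtain ⟨p0, hp0⟩ := hBne
      rw [ht₀, ht₁]
      exact le_trans (Finset.inf'_le _ hp0)
        (le_trans (hGB.1 p0 hp0 i).le (Finset.le_sup' (fun p => p.2 i) hp0))
    have hf0 : lvol i ℬ t₀ = 0 := lvol_bot i (fun p hp => Finset.inf'_le _ hp)
    have hf1 : lvol i ℬ t₁ = b :=
      lvol_top i hGB (fun p hp => by rw [ht₁]; exact Finset.le_sup' (fun p => p.2 i) hp)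
    have hmem : θ * b ∈ Set.Icc (lvol i ℬ t₀) (lvol i ℬ t₁) := by
      rw [hf0, hf1]
      constructor
      · positivity
      · nlinarith
    obtain ⟨t, _, hft⟩ := intermediate_value_Icc ht01 (lvol_continuous i ℬ).continuousOn hmem
    set BL := Lfam i t ℬ with hBL
    set BR := Rfam i t ℬ with hBR
    have hUBL : U BL = U ℬ ∩ {x | x i < t} := U_Lfam i t ℬ
    have hUBR : U BR = U ℬ ∩ {x | t ≤ x i} := U_Rfam i t ℬ
    set bL := (volume (U BL)).toReal with hbLd
    set bR := (volume (U BR)).toReal with hbRd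
    have hbLθ : bL = θ * b := by
      rw [hbLd, hUBL, lvol_eq i ℬ hGB t, hft]
    have hbLR : bL + bR = b := by
      rw [hbLd, hbRd, hUBL, hUBR]; exact vol_split_toReal i t ℬ
    have hbRθ : bR = (1 - θ) * b := by
      have hx : bR = b - bL := by linarith
      rw [hx, hbLθ]; ring
    have hbL_pos : 0 < bL := by rw [hbLθ]; positivity
    have hbR_pos : 0 < bR := by rw [hbRθ]; nlinarith
    have hBLne : BL.Nonempty := nonempty_of_vol_pos hbL_pos
    have hBRne : BR.Nonempty := nonempty_of_vol_pos hbR_pos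
    -- cardinalities
    have hNL : AL.card + BL.card < N :=
      lt_of_lt_of_le (add_lt_add_of_lt_of_le (card_Lfam_lt hQ hci) (card_Lfam_le i t ℬ)) hcard
    have hNR : AR.card + BR.card < N :=
      lt_of_lt_of_le (add_lt_add_of_lt_of_le (card_Rfam_lt hP le_rfl) (card_Rfam_le i t ℬ)) hcard
    -- induction hypotheses
    have IHL := IH _ hNL AL BL le_rfl ⟨P, hPA⟩ hBLne (Good_Lfam i c hGA) (Good_Lfam i t hGB)
    have IHR := IH _ hNR AR BR le_rfl ⟨Q, hQA⟩ hBRne (Good_Rfam i c hGA) (Good_Rfam i t hGB)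
    -- inclusions
    have hsubL : U AL + U BL ⊆ (U 𝒜 + U ℬ) ∩ {x | x i < c + t} := by
      rw [hUAL, hUBL]
      rintro x ⟨y, hy, z, hz, rfl⟩
      exact ⟨⟨y, hy.1, z, hz.1, rfl⟩, show y i + z i < c + t from add_lt_add hy.2 hz.2⟩
    have hsubR : U AR + U BR ⊆ (U 𝒜 + U ℬ) ∩ {x | c + t ≤ x i} := by
      rw [hUAR, hUBR]
      rintro x ⟨y, hy, z, hz, rfl⟩
      exact ⟨⟨y, hy.1, z, hz.1, rfl⟩, show c + t ≤ y i + z i from add_le_add hy.2 hz.2⟩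
    have hdisj : Disjoint (U AL + U BL) (U AR + U BR) := by
      refine Disjoint.mono (hsubL.trans inter_subset_right) (hsubR.trans inter_subset_right) ?_
      refine Set.disjoint_left.2 fun x hx hx' => ?_
      exact absurd (show c + t ≤ x i from hx') (not_le.2 (show x i < c + t from hx))
    have hmeasR : MeasurableSet (U AR + U BR) :=
      U_add_U_measurable (Good_Rfam i c hGA).1 (Good_Rfam i t hGB).1
    have hvol : volume (U AL + U BL) + volume (U AR + U BR) ≤ volume (U 𝒜 + U ℬ) := by
      rw [← measure_union hdisj hmeasR]
      exact measure_mono (union_subset (hsubL.trans inter_subset_left)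
        (hsubR.trans inter_subset_left))
    set vL := (volume (U AL + U BL)).toReal with hvL
    set vR := (volume (U AR + U BR)).toReal with hvR
    set v := (volume (U 𝒜 + U ℬ)).toReal with hv
    have hvtot : vL + vR ≤ v := by
      rw [hvL, hvR, hv, ← ENNReal.toReal_add
        (vol_U_add_U_ne_top (Good_Lfam i c hGA).1 (Good_Lfam i t hGB).1)
        (vol_U_add_U_ne_top (Good_Rfam i c hGA).1 (Good_Rfam i t hGB).1)]
      exact ENNReal.toReal_mono (vol_U_add_U_ne_top hGA.1 hGB.1) hvol
    -- algebra
    set r : ℝ := (1:ℝ)/n with hrdef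
    set s := a ^ r + b ^ r with hs
    have hs_nonneg : 0 ≤ s := by
      rw [hs]; positivity
    have hL : θ * s ^ n ≤ vL := by
      have h1 : aL ^ r + bL ^ r ≤ vL ^ r := IHL
      have h2 : (aL ^ r + bL ^ r) ^ n ≤ vL := by
        refine pow_of_rpow_le hn (by positivity) ?_ h1
        rw [hvL]; exact ENNReal.toReal_nonneg
      calc θ * s ^ n = (θ ^ r) ^ n * s ^ n := by rw [theta_pow hn hθ0.le]
        _ = (θ ^ r * s) ^ n := (mul_pow _ _ _).symm
        _ = (aL ^ r + bL ^ r) ^ n := by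
            rw [haLθ, hbLθ, hs, mul_add,
              Real.mul_rpow hθ0.le ha_pos.le, Real.mul_rpow hθ0.le hb_pos.le]
        _ ≤ vL := h2
    have hR : (1 - θ) * s ^ n ≤ vR := by
      have h1 : aR ^ r + bR ^ r ≤ vR ^ r := IHR
      have h2 : (aR ^ r + bR ^ r) ^ n ≤ vR := by
        refine pow_of_rpow_le hn (by positivity) ?_ h1
        rw [hvR]; exact ENNReal.toReal_nonneg
      have h1θ : (0:ℝ) ≤ 1 - θ := by linarith
      calc (1 - θ) * s ^ n = ((1 - θ) ^ r) ^ n * s ^ n := by rw [theta_pow hn h1θ]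
        _ = ((1 - θ) ^ r * s) ^ n := (mul_pow _ _ _).symm
        _ = (aR ^ r + bR ^ r) ^ n := by
            rw [haRθ, hbRθ, hs, mul_add,
              Real.mul_rpow h1θ ha_pos.le, Real.mul_rpow h1θ hb_pos.le]
        _ ≤ vR := h2
    have hfin : s ^ n ≤ v := by nlinarith
    exact rpow_of_pow_le hn hs_nonneg hfin
  -- now split into cases
  rcases lt_or_ge 𝒜.card 2 with hA2 | hA2
  · rcases lt_or_ge ℬ.card 2 with hB2 | hB2
    · -- both singletons
      have hA1 : 𝒜.card = 1 := le_antisymm (by omega) (Finset.card_pos.2 hAne)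
      have hB1 : ℬ.card = 1 := le_antisymm (by omega) (Finset.card_pos.2 hBne)
      obtain ⟨P, rfl⟩ := Finset.card_eq_one.mp hA1
      obtain ⟨Q, rfl⟩ := Finset.card_eq_one.mp hB1
      have hUP : U ({P} : Finset ((Fin n → ℝ) × (Fin n → ℝ))) = I P := by
        simp [U]
      have hUQ : U ({Q} : Finset ((Fin n → ℝ) × (Fin n → ℝ))) = I Q := by
        simp [U]
      rw [hUP, hUQ]
      exact bm_base hn P Q (hGA.1 P (Finset.mem_singleton_self P))
        (hGB.1 Q (Finset.mem_singleton_self Q))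
    · -- ℬ has two boxes: swap
      obtain ⟨P, hP, Q, hQ, hPQ⟩ := Finset.one_lt_card.mp hB2
      obtain ⟨i, hsep⟩ := exists_sep (hGB.1 P hP) (hGB.1 Q hQ) (hGB.2 P hP Q hQ hPQ)
      have hcomm : U ℬ + U 𝒜 = U 𝒜 + U ℬ := add_comm _ _
      have hres : (volume (U ℬ)).toReal ^ ((1:ℝ)/n) + (volume (U 𝒜)).toReal ^ ((1:ℝ)/n)
          ≤ (volume (U ℬ + U 𝒜)).toReal ^ ((1:ℝ)/n) := by
        rcases hsep with h | h
        · exact key ℬ 𝒜 (by omega) hAne hGB hGA P Q hP hQ hPQ i h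
        · exact key ℬ 𝒜 (by omega) hAne hGB hGA Q P hQ hP hPQ.symm i h
      rw [hcomm] at hres
      linarith
  · -- 𝒜 has two boxes
    obtain ⟨P, hP, Q, hQ, hPQ⟩ := Finset.one_lt_card.mp hA2
    obtain ⟨i, hsep⟩ := exists_sep (hGA.1 P hP) (hGA.1 Q hQ) (hGA.2 P hP Q hQ hPQ)
    rcases hsep with h | h
    · exact key 𝒜 ℬ hcard hBne hGA hGB P Q hP hQ hPQ i h
    · exact key 𝒜 ℬ hcard hBne hGA hGB Q P hQ hP hPQ.symm i h


-- grid approximation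


/-- The grid box with corner `m * ε`. -/
def gridBox (ε : ℝ) (m : Fin n → ℤ) : (Fin n → ℝ) × (Fin n → ℝ) :=
  (fun i => m i * ε, fun i => m i * ε + ε)

lemma gridBox_inj {ε : ℝ} (hε : 0 < ε) : Function.Injective (gridBox (n := n) ε) := by
  intro m m' h
  funext i
  have := congrFun (congrArg Prod.fst h) i
  have h2 : (m i : ℝ) = m' i := mul_right_cancel₀ hε.ne' this
  exact_mod_cast h2

lemma gridBox_nondeg {ε : ℝ} (hε : 0 < ε) (m : Fin n → ℤ) : Nondeg (gridBox ε m) :=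
  fun i => by simp [gridBox, hε]

lemma gridBox_disjoint {ε : ℝ} (hε : 0 < ε) {m m' : Fin n → ℤ} (h : m ≠ m') :
    Disjoint (I (gridBox ε m)) (I (gridBox ε m')) := by
  obtain ⟨i, hi⟩ := Function.ne_iff.mp h
  refine Set.disjoint_left.2 fun x hx hx' => ?_
  have h1 := hx i (mem_univ i)
  have h2 := hx' i (mem_univ i)
  simp only [gridBox, mem_Ico] at h1 h2
  rcases lt_or_gt_of_ne hi with hlt | hlt
  · have : (m i : ℝ) + 1 ≤ m' i := by exact_mod_cast hlt
    nlinarith [h1.2, h2.1]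
  · have : (m' i : ℝ) + 1 ≤ m i := by exact_mod_cast hlt
    nlinarith [h1.1, h2.2]

/-- Grid approximation of a compact set. -/
lemma grid_approx {A : Set (Fin n → ℝ)} (hc : IsCompact A) (hne : A.Nonempty)
    {ε : ℝ} (hε : 0 < ε) :
    ∃ 𝒜 : Finset ((Fin n → ℝ) × (Fin n → ℝ)), 𝒜.Nonempty ∧ Good 𝒜 ∧
      A ⊆ U 𝒜 ∧ U 𝒜 ⊆ A + Metric.closedBall 0 ε := by
  classical
  obtain ⟨R, hR⟩ := hc.isBounded.subset_closedBall 0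
  set Sset : Set (Fin n → ℤ) := {m | (I (gridBox ε m) ∩ A).Nonempty} with hSset
  have hfin : Sset.Finite := by
    have hsub : Sset ⊆ Set.pi Set.univ fun _ : Fin n => Set.Icc ⌈(-R - ε) / ε⌉ ⌊R / ε⌋ := by
      rintro m ⟨x, hx, hxA⟩ i -
      have hxi := hx i (mem_univ i)
      simp only [gridBox, mem_Ico] at hxi
      have hnorm : |x i| ≤ R := by
        have := hR hxA
        rw [Metric.mem_closedBall, dist_zero_right] at this
        exact le_trans (by rw [← Real.norm_eq_abs]; exact norm_le_pi_norm x i) this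
      rw [abs_le] at hnorm
      constructor
      · rw [Int.ceil_le]
        rw [div_le_iff₀ hε]
        nlinarith [hxi.1, hxi.2, hnorm.1]
      · rw [Int.le_floor]
        rw [le_div_iff₀ hε]
        nlinarith [hxi.1, hnorm.2]
    exact Set.Finite.subset (Set.Finite.pi fun _ => Set.finite_Icc _ _) hsub
  refine ⟨hfin.toFinset.image (gridBox ε), ?_, ⟨?_, ?_⟩, ?_, ?_⟩
  · -- nonempty
    obtain ⟨x, hx⟩ := hne
    refine Finset.Nonempty.image ⟨fun i => ⌊x i / ε⌋, ?_⟩ _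
    rw [Set.Finite.mem_toFinset]
    refine ⟨x, fun i _ => ?_, hx⟩
    simp only [gridBox, mem_Ico]
    constructor
    · rw [← le_div_iff₀ hε]; exact Int.floor_le _
    · have := Int.lt_floor_add_one (x i / ε)
      rw [div_lt_iff₀ hε] at this
      linarith [this]
  · -- nondeg
    intro p hp
    obtain ⟨m, _, rfl⟩ := Finset.mem_image.mp hp
    exact gridBox_nondeg hε m
  · -- disjoint
    intro p hp q hq hpq
    obtain ⟨m, _, rfl⟩ := Finset.mem_image.mp hp
    obtain ⟨m', _, rfl⟩ := Finset.mem_image.mp hq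
    exact gridBox_disjoint hε fun h => hpq (by rw [h])
  · -- A ⊆ U
    intro x hx
    have hm : (fun i => ⌊x i / ε⌋) ∈ Sset := by
      refine ⟨x, fun i _ => ?_, hx⟩
      simp only [gridBox, mem_Ico]
      constructor
      · rw [← le_div_iff₀ hε]; exact Int.floor_le _
      · have := Int.lt_floor_add_one (x i / ε)
        rw [div_lt_iff₀ hε] at this
        linarith [this]
    refine Set.mem_biUnion (Finset.mem_image.2 ⟨_, Set.Finite.mem_toFinset _ |>.2 hm, rfl⟩) ?_
    intro i _
    simp only [gridBox, mem_Ico]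
    constructor
    · rw [← le_div_iff₀ hε]; exact Int.floor_le _
    · have := Int.lt_floor_add_one (x i / ε)
      rw [div_lt_iff₀ hε] at this
      linarith [this]
  · -- U ⊆ A + ball
    intro u hu
    obtain ⟨p, hp, hup⟩ := Set.mem_iUnion₂.mp hu
    obtain ⟨m, hm, rfl⟩ := Finset.mem_image.mp hp
    rw [Set.Finite.mem_toFinset] at hm
    obtain ⟨x, hx, hxA⟩ := hm
    refine ⟨x, hxA, u - x, ?_, by ring⟩
    rw [Metric.mem_closedBall, dist_zero_right]
    rw [pi_norm_le_iff_of_nonneg hε.le]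
    intro i
    have h1 := hup i (mem_univ i)
    have h2 := hx i (mem_univ i)
    simp only [gridBox, mem_Ico] at h1 h2
    rw [Pi.sub_apply, Real.norm_eq_abs, abs_le]
    constructor <;> linarith [h1.1, h1.2, h2.1, h2.2]


end BM


open BM in
/-- **Brunn–Minkowski inequality**: for nonempty compact sets `A₁ A₂ ⊆ ℝⁿ`,
`|A₁ + A₂|^(1/n) ≥ |A₁|^(1/n) + |A₂|^(1/n)`. -/
theorem brunn_minkowski (n : ℕ) (hn : 1 ≤ n) (A₁ A₂ : Set (Fin n → ℝ))
    (hc₁ : IsCompact A₁) (hc₂ : IsCompact A₂)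
    (hne₁ : A₁.Nonempty) (hne₂ : A₂.Nonempty) :
    (volume A₁).toReal ^ ((1 : ℝ) / n) + (volume A₂).toReal ^ ((1 : ℝ) / n) ≤
      (volume (A₁ + A₂)).toReal ^ ((1 : ℝ) / n) := by
  have hr : (0:ℝ) < 1 / n := by positivity
  set K := A₁ + A₂ with hKd
  have hK : IsCompact K := hc₁.add hc₂
  set s : ℕ → Set (Fin n → ℝ) := fun k => K + Metric.closedBall 0 (2 / (k + 1)) with hsd
  have hscompact : ∀ k, IsCompact (s k) := fun k => hK.add (isCompact_closedBall _ _)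
  have key : ∀ k : ℕ, (volume A₁).toReal ^ ((1 : ℝ) / n) + (volume A₂).toReal ^ ((1 : ℝ) / n)
      ≤ (volume (s k)).toReal ^ ((1 : ℝ) / n) := by
    intro k
    have hε : (0:ℝ) < 1 / (k + 1) := by positivity
    obtain ⟨𝒜, hAne, hGA, hsubA, hencA⟩ := grid_approx hc₁ hne₁ hε
    obtain ⟨ℬ, hBne, hGB, hsubB, hencB⟩ := grid_approx hc₂ hne₂ hε
    have h1 : (volume A₁).toReal ^ ((1 : ℝ) / n) ≤ (volume (U 𝒜)).toReal ^ ((1 : ℝ) / n) :=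
      Real.rpow_le_rpow ENNReal.toReal_nonneg
        (ENNReal.toReal_mono (vol_U_ne_top _) (measure_mono hsubA)) hr.le
    have h2 : (volume A₂).toReal ^ ((1 : ℝ) / n) ≤ (volume (U ℬ)).toReal ^ ((1 : ℝ) / n) :=
      Real.rpow_le_rpow ENNReal.toReal_nonneg
        (ENNReal.toReal_mono (vol_U_ne_top _) (measure_mono hsubB)) hr.le
    have hbm := bm_fam hn (𝒜.card + ℬ.card) 𝒜 ℬ le_rfl hAne hBne hGA hGB
    have hsub : U 𝒜 + U ℬ ⊆ s k := by
      refine subset_trans (add_subset_add hencA hencB) ?_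
      rw [hsd]
      have hre : (A₁ + Metric.closedBall 0 (1/(k+1))) + (A₂ + Metric.closedBall (0:Fin n → ℝ) (1/(k+1)))
          = K + (Metric.closedBall (0:Fin n → ℝ) (1/(k+1)) + Metric.closedBall 0 (1/(k+1))) := by
        rw [hKd]; exact add_add_add_comm _ _ _ _
      rw [hre]
      refine Set.add_subset_add_left ?_
      rintro x ⟨y, hy, z, hz, rfl⟩
      rw [Metric.mem_closedBall, dist_zero_right] at *
      calc ‖y + z‖ ≤ ‖y‖ + ‖z‖ := norm_add_le y z
        _ ≤ 1/(k+1) + 1/(k+1) := add_le_add hy hz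
        _ = 2/(k+1) := by ring
    have h3 : (volume (U 𝒜 + U ℬ)).toReal ^ ((1 : ℝ) / n)
        ≤ (volume (s k)).toReal ^ ((1 : ℝ) / n) :=
      Real.rpow_le_rpow ENNReal.toReal_nonneg
        (ENNReal.toReal_mono (hscompact k).measure_lt_top.ne (measure_mono hsub)) hr.le
    calc (volume A₁).toReal ^ ((1 : ℝ) / n) + (volume A₂).toReal ^ ((1 : ℝ) / n)
        ≤ (volume (U 𝒜)).toReal ^ ((1 : ℝ) / n) + (volume (U ℬ)).toReal ^ ((1 : ℝ) / n) :=
          add_le_add h1 h2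
      _ ≤ (volume (U 𝒜 + U ℬ)).toReal ^ ((1 : ℝ) / n) := hbm
      _ ≤ (volume (s k)).toReal ^ ((1 : ℝ) / n) := h3
  -- limit argument
  have hanti : Antitone s := by
    intro k l hkl
    rw [hsd]
    refine Set.add_subset_add_left (Metric.closedBall_subset_closedBall ?_)
    have h1 : (0:ℝ) < (k:ℝ) + 1 := by positivity
    have h2 : (k:ℝ) + 1 ≤ (l:ℝ) + 1 := by exact_mod_cast by omega
    exact div_le_div_of_nonneg_left (by norm_num) h1 h2
  have hiInter : ⋂ k, s k = K := by
    apply Subset.antisymm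
    · intro x hx
      have hcl : x ∈ closure K := by
        rw [Metric.mem_closure_iff]
        intro δ hδ
        obtain ⟨k, hk⟩ := exists_nat_gt (2 / δ)
        obtain ⟨y, hy, z, hz, rfl⟩ := mem_iInter.mp hx k
        refine ⟨y, hy, ?_⟩
        rw [Metric.mem_closedBall, dist_zero_right] at hz
        have h1 : (0:ℝ) < (k:ℝ) + 1 := by positivity
        have h2 : 2 / ((k:ℝ) + 1) < δ := by
          rw [div_lt_iff₀ h1]
          have : 2 / δ < (k:ℝ) + 1 := lt_trans hk (by linarith)
          rw [div_lt_iff₀ hδ] at this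
          linarith
        have : dist (y + z) y = ‖z‖ := by
          rw [dist_eq_norm]; congr 1; abel
        rw [this]
        exact lt_of_le_of_lt hz h2
      rwa [hK.isClosed.closure_eq] at hcl
    · intro x hx
      refine mem_iInter.2 fun k => ⟨x, hx, 0, ?_, add_zero x⟩
      rw [Metric.mem_closedBall, dist_self]
      positivity
  have h0 : Filter.Tendsto (fun k => volume (s k)) Filter.atTop (nhds (volume K)) := by
    have := tendsto_measure_iInter_atTop
      (fun k => ((hscompact k).isClosed.measurableSet).nullMeasurableSet) hanti
      ⟨0, ((hscompact 0).measure_lt_top (μ := volume)).ne⟩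
    rwa [hiInter] at this
  have h1 : Filter.Tendsto (fun k => (volume (s k)).toReal) Filter.atTop
      (nhds (volume K).toReal) :=
    (ENNReal.tendsto_toReal hK.measure_lt_top.ne).comp h0
  have h2 : Filter.Tendsto (fun k => (volume (s k)).toReal ^ ((1 : ℝ)/n)) Filter.atTop
      (nhds ((volume K).toReal ^ ((1 : ℝ)/n))) :=
    ((Real.continuousAt_rpow_const _ _ (Or.inr hr.le)).tendsto).comp h1
  exact ge_of_tendsto' h2 key
end

section
/- If B₂ ⊆ B₁ are both p-balls in ℝⁿ (unit balls of p-norms for some 0 < p ≤ 1), then the covering number N(B₁, B₂) is comparable to the volume ratio |B₁|/|B₂|: there is a constant c(p) > 0 depending only on p with c(p)^(-n) · |B₁|/|B₂| ≤ N(B₁, B₂) and N(B₁, B₂) ≤ c(p)ⁿ · |B₁|/|B₂|. -/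
open MeasureTheory Set Pointwise ENNReal NNReal

/-- `B` is a `p`-ball in `ℝⁿ`: a compact symmetric `p`-convex set with `0` in its
interior. -/
def IsPBall (n : ℕ) (p : ℝ) (B : Set (Fin n → ℝ)) : Prop :=
  IsCompact B ∧ B = -B ∧ (0 : Fin n → ℝ) ∈ interior B ∧
    ∀ x ∈ B, ∀ y ∈ B, ∀ l m : ℝ, 0 ≤ l → 0 ≤ m → l ^ p + m ^ p = 1 →
      l • x + m • y ∈ B

/-- The translative covering number `N(A, B)`. -/
noncomputable def covN {X : Type*} [AddCommGroup X] (A B : Set X) : ℕ∞ :=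
  ⨅ (t : Finset X) (_ : A ⊆ ⋃ x ∈ t, x +ᵥ B), (t.card : ℕ∞)

section helpers

variable {n : ℕ} {p : ℝ} {B : Set (Fin n → ℝ)}

lemma lam_rpow (hp : 0 < p) : (((2:ℝ) ^ (1/p))⁻¹) ^ p = 2⁻¹ := by
  rw [Real.inv_rpow (Real.rpow_nonneg (by norm_num) _), ← Real.rpow_mul (by norm_num),
    one_div_mul_cancel hp.ne', Real.rpow_one]

lemma lam_pos : 0 < ((2:ℝ) ^ (1/p))⁻¹ :=
  inv_pos.2 (Real.rpow_pos_of_pos (by norm_num) _)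

lemma IsPBall.zero_mem (hB : IsPBall n p B) : (0 : Fin n → ℝ) ∈ B :=
  interior_subset hB.2.2.1

lemma IsPBall.neg_mem (hB : IsPBall n p B) {x} (hx : x ∈ B) : -x ∈ B := by
  rw [hB.2.1] at hx; exact Set.mem_neg.1 hx

lemma IsPBall.comb (hp : 0 < p) (hB : IsPBall n p B) {x y} (hx : x ∈ B) (hy : y ∈ B) :
    ((2:ℝ) ^ (1/p))⁻¹ • x + ((2:ℝ) ^ (1/p))⁻¹ • y ∈ B := by
  refine hB.2.2.2 x hx y hy _ _ lam_pos.le lam_pos.le ?_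
  rw [lam_rpow hp]; norm_num

lemma IsPBall.lam_smul_mem (hp : 0 < p) (hB : IsPBall n p B) {x} (hx : x ∈ B) :
    ((2:ℝ) ^ (1/p))⁻¹ • x ∈ B := by
  simpa using hB.comb hp hx hB.zero_mem

lemma IsPBall.volume_pos (hB : IsPBall n p B) : 0 < volume B :=
  Measure.measure_pos_of_nonempty_interior _ ⟨0, hB.2.2.1⟩

lemma IsPBall.volume_lt_top (hB : IsPBall n p B) : volume B < ⊤ :=
  hB.1.measure_lt_top

lemma covN_attained {X : Type*} [AddCommGroup X] {A B : Set X}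
    (h : ∃ t : Finset X, A ⊆ ⋃ x ∈ t, x +ᵥ B) :
    ∃ t : Finset X, (A ⊆ ⋃ x ∈ t, x +ᵥ B) ∧ covN A B = t.card := by
  set S : Set ℕ := {k | ∃ t : Finset X, (A ⊆ ⋃ x ∈ t, x +ᵥ B) ∧ t.card = k} with hS
  have hSne : S.Nonempty := by obtain ⟨t, ht⟩ := h; exact ⟨t.card, t, ht, rfl⟩
  obtain ⟨t, ht, htc⟩ := Nat.sInf_mem hSne
  refine ⟨t, ht, le_antisymm (iInf₂_le t ht) ?_⟩
  refine le_iInf₂ fun t' ht' => ?_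
  have : sInf S ≤ t'.card := Nat.sInf_le ⟨t', ht', rfl⟩
  exact_mod_cast htc ▸ this

end helpers

/-- For `p`-balls `B₂ ⊆ B₁` in `ℝⁿ`, the covering number `N(B₁, B₂)` is comparable to
the volume ratio `|B₁|/|B₂|`, with constant depending only on `p`. -/
theorem covN_comparable_volume_ratio (p : ℝ) (hp : 0 < p) (hp1 : p ≤ 1) :
    ∃ c : ℝ≥0, 0 < c ∧ ∀ (n : ℕ) (B₁ B₂ : Set (Fin n → ℝ)),
      IsPBall n p B₁ → IsPBall n p B₂ → B₂ ⊆ B₁ →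
      ((c : ℝ≥0∞))⁻¹ ^ n * (volume B₁ / volume B₂) ≤ (covN B₁ B₂ : ℝ≥0∞) ∧
      (covN B₁ B₂ : ℝ≥0∞) ≤ (c : ℝ≥0∞) ^ n * (volume B₁ / volume B₂) := by
  have h2 : (0:ℝ) < 2 := by norm_num
  set rr : ℝ := (2:ℝ) ^ (1/p) with hrrdef
  set lam : ℝ := rr⁻¹ with hlamdef
  have hrr1 : 1 ≤ rr := Real.one_le_rpow (by norm_num) (by positivity)
  have hrrpos : 0 < rr := lt_of_lt_of_le one_pos hrr1
  have hlampos : 0 < lam := inv_pos.2 hrrpos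
  refine ⟨(rr ^ 2).toNNReal, Real.toNNReal_pos.2 (by positivity), ?_⟩
  intro n B₁ B₂ hB₁ hB₂ hsub
  have hc : (((rr ^ 2).toNNReal : ℝ≥0) : ℝ≥0∞) = ENNReal.ofReal (rr ^ 2) := rfl
  have h1c : (1:ℝ≥0∞) ≤ ((rr ^ 2).toNNReal : ℝ≥0∞) := by
    rw [hc]; exact ENNReal.one_le_ofReal.2 (one_le_pow₀ hrr1)
  have hvol_smul : ∀ (s : Set (Fin n → ℝ)) (a : ℝ), 0 < a →
      volume (a • s) = ENNReal.ofReal (a ^ n) * volume s := by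
    intro s a ha
    rw [Measure.addHaar_smul]
    simp [abs_of_pos ha]
  -- key: volume bound for separated sets
  have key : ∀ t : Finset (Fin n → ℝ), ↑t ⊆ B₁ →
      ((↑t : Set (Fin n → ℝ)).Pairwise fun x y => x - y ∉ B₂) →
      (t.card : ℝ≥0∞) * (ENNReal.ofReal (lam ^ n) * volume B₂)
        ≤ ENNReal.ofReal (rr ^ n) * volume B₁ := by
    intro t htB hsep
    have hdisj : (↑t : Set (Fin n → ℝ)).PairwiseDisjoint (fun y => y +ᵥ lam • B₂) := by
      intro x hx y hy hxy
      refine Set.disjoint_left.2 fun z hzx hzy => ?_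
      obtain ⟨b, ⟨w, hw, rfl⟩, rfl⟩ := hzx
      obtain ⟨b', ⟨w', hw', rfl⟩, heq⟩ := hzy
      refine hsep hx hy hxy ?_
      have heq' : y + lam • w' = x + lam • w := heq
      have h1 : x - y = lam • w' - lam • w := by
        rw [sub_eq_sub_iff_add_eq_add]
        exact heq'.symm.trans (add_comm y (lam • w'))
      rw [h1, sub_eq_add_neg, ← smul_neg]
      exact hB₂.comb hp hw' (hB₂.neg_mem hw)
    have hmeas : ∀ y ∈ t, MeasurableSet (y +ᵥ lam • B₂) :=
      fun y _ => ((hB₂.1.smul lam).isClosed.measurableSet).const_vadd y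
    have hsum := measure_biUnion_finset (μ := volume) hdisj hmeas
    have hsubU : (⋃ y ∈ t, y +ᵥ lam • B₂) ⊆ rr • B₁ := by
      intro z hz
      obtain ⟨y, hyt, hzy⟩ := Set.mem_iUnion₂.1 hz
      obtain ⟨b, ⟨w, hw, rfl⟩, rfl⟩ := hzy
      have h1 : lam • w ∈ B₁ := hB₁.lam_smul_mem hp (hsub hw)
      have h2' : lam • y + lam • (lam • w) ∈ B₁ := hB₁.comb hp (htB hyt) h1
      have h3 : rr • (lam • y + lam • (lam • w)) ∈ rr • B₁ := smul_mem_smul_set h2'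
      have hrl : rr * lam = 1 := mul_inv_cancel₀ hrrpos.ne'
      have h4 : rr • (lam • y + lam • (lam • w)) = y + lam • w := by
        simp only [smul_add, smul_smul, ← mul_assoc, hrl, one_mul, one_smul]
      show y +ᵥ lam • w ∈ rr • B₁
      rw [vadd_eq_add, ← h4]; exact h3
    calc (t.card : ℝ≥0∞) * (ENNReal.ofReal (lam ^ n) * volume B₂)
        = ∑ y ∈ t, volume (y +ᵥ lam • B₂) := by
          rw [Finset.sum_congr rfl fun y _ => by
            rw [measure_vadd, hvol_smul _ _ hlampos]]
          rw [Finset.sum_const, nsmul_eq_mul]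
      _ = volume (⋃ y ∈ t, y +ᵥ lam • B₂) := (hsum).symm
      _ ≤ volume (rr • B₁) := measure_mono hsubU
      _ = ENNReal.ofReal (rr ^ n) * volume B₁ := hvol_smul _ _ hrrpos
  set a : ℝ≥0∞ := ENNReal.ofReal (lam ^ n) with ha
  set b : ℝ≥0∞ := ENNReal.ofReal (rr ^ n) with hb
  have ha_ne0 : a ≠ 0 := by
    rw [ha, Ne, ENNReal.ofReal_eq_zero, not_le]; positivity
  have ha_netop : a ≠ ⊤ := ENNReal.ofReal_ne_top
  have ha0 : a * volume B₂ ≠ 0 := mul_ne_zero ha_ne0 hB₂.volume_pos.ne'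
  have hatop : a * volume B₂ ≠ ⊤ := ENNReal.mul_ne_top ha_netop hB₂.volume_lt_top.ne
  set D : ℝ≥0∞ := b * volume B₁ / (a * volume B₂) with hD
  have hDtop : D ≠ ⊤ :=
    (ENNReal.div_lt_top (ENNReal.mul_ne_top ENNReal.ofReal_ne_top hB₁.volume_lt_top.ne) ha0).ne
  set M : ℕ := ⌈D.toReal⌉₊ with hM
  have hbd : ∀ t : Finset (Fin n → ℝ), ↑t ⊆ B₁ →
      ((↑t : Set (Fin n → ℝ)).Pairwise fun x y => x - y ∉ B₂) → t.card ≤ M := by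
    intro t h1 h2'
    have hle : (t.card : ℝ≥0∞) ≤ D :=
      (ENNReal.le_div_iff_mul_le (Or.inl ha0) (Or.inl hatop)).2 (key t h1 h2')
    have h3 := ENNReal.toReal_mono hDtop hle
    simp only [ENNReal.toReal_natCast] at h3
    exact_mod_cast h3.trans (Nat.le_ceil D.toReal)
  set S : Set ℕ := {k | ∃ t : Finset (Fin n → ℝ), ↑t ⊆ B₁ ∧
      ((↑t : Set (Fin n → ℝ)).Pairwise fun x y => x - y ∉ B₂) ∧ t.card = k} with hSdef
  have hSne : S.Nonempty := ⟨0, ∅, by simp, by simp, rfl⟩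
  have hSbdd : BddAbove S := ⟨M, fun k ⟨t, h1, h2', h3⟩ => h3 ▸ hbd t h1 h2'⟩
  obtain ⟨t, htB, htsep, htcard⟩ := Nat.sSup_mem hSne hSbdd
  have hcover : B₁ ⊆ ⋃ y ∈ t, y +ᵥ B₂ := by
    intro x hx
    by_contra hnc
    have hx' : ∀ y ∈ t, x - y ∉ B₂ := by
      intro y hy hmem
      exact hnc (Set.mem_iUnion₂.2 ⟨y, hy, ⟨x - y, hmem, by show y + (x - y) = x; abel⟩⟩)
    have hxt : x ∉ t := fun h => hx' x h (by simpa using hB₂.zero_mem)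
    have hins : ((insert x t : Finset (Fin n → ℝ)) : Set (Fin n → ℝ)).Pairwise
        fun u v => u - v ∉ B₂ := by
      rw [Finset.coe_insert]
      refine htsep.insert fun y hy hne => ⟨hx' y hy, fun hmem => hx' y hy ?_⟩
      have := hB₂.neg_mem hmem; rwa [neg_sub] at this
    have hmemS : t.card + 1 ∈ S :=
      ⟨insert x t, by rw [Finset.coe_insert]; exact Set.insert_subset hx htB, hins,
        by rw [Finset.card_insert_of_notMem hxt]⟩
    have := le_csSup hSbdd hmemS
    omega
  obtain ⟨t', hcov', hval⟩ := covN_attained ⟨t, hcover⟩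
  constructor
  · -- lower bound
    have hv : volume B₁ ≤ (t'.card : ℝ≥0∞) * volume B₂ := by
      calc volume B₁ ≤ volume (⋃ y ∈ t', y +ᵥ B₂) := measure_mono hcov'
        _ ≤ ∑ y ∈ t', volume (y +ᵥ B₂) := measure_biUnion_finset_le _ _
        _ = t'.card * volume B₂ := by
            simp [measure_vadd, Finset.sum_const, nsmul_eq_mul]
    have hratio : volume B₁ / volume B₂ ≤ (t'.card : ℝ≥0∞) :=
      ENNReal.div_le_of_le_mul hv
    calc ((((rr ^ 2).toNNReal : ℝ≥0) : ℝ≥0∞))⁻¹ ^ n * (volume B₁ / volume B₂)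
        ≤ 1 * (volume B₁ / volume B₂) :=
          mul_le_mul_left (pow_le_one' (ENNReal.inv_le_one.2 h1c) n) _
      _ = volume B₁ / volume B₂ := one_mul _
      _ ≤ (t'.card : ℝ≥0∞) := hratio
      _ = ((covN B₁ B₂ : ℕ∞) : ℝ≥0∞) := by rw [hval]; exact_mod_cast rfl
  · -- upper bound
    have h1' : ((covN B₁ B₂ : ℕ∞) : ℝ≥0∞) ≤ (t.card : ℝ≥0∞) := by
      have : covN B₁ B₂ ≤ (t.card : ℕ∞) := iInf₂_le t hcover
      exact_mod_cast this
    refine h1'.trans ?_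
    have hle : (t.card : ℝ≥0∞) ≤ D :=
      (ENNReal.le_div_iff_mul_le (Or.inl ha0) (Or.inl hatop)).2 (key t htB htsep)
    refine hle.trans (le_of_eq ?_)
    have hba : b / a = (((rr ^ 2).toNNReal : ℝ≥0) : ℝ≥0∞) ^ n := by
      rw [hc, ha, hb, ← ENNReal.ofReal_div_of_pos (by positivity),
        ← ENNReal.ofReal_pow (by positivity)]
      congr 1
      rw [← div_pow]
      congr 1
      rw [hlamdef, div_eq_mul_inv, inv_inv, sq]
    rw [hD, div_eq_mul_inv, div_eq_mul_inv, ENNReal.mul_inv (Or.inl ha_ne0) (Or.inl ha_netop),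
      ← hba, div_eq_mul_inv]
    ring
end

section
/- If B is a p-ball in ℝⁿ (0 < p ≤ 1) and B̂ = conv(B) is its convex hull, then B ⊆ B̂ ⊆ n^(1/p − 1) · B. -/
open MeasureTheory Set Pointwise

-- star-shapedness from p-convexity
lemma pball_star {n : ℕ} {p : ℝ} (hp : 0 < p) {B : Set (Fin n → ℝ)}
    (h0 : (0 : Fin n → ℝ) ∈ B)
    (hpc : ∀ x ∈ B, ∀ y ∈ B, ∀ l m : ℝ, 0 ≤ l → 0 ≤ m → l ^ p + m ^ p = 1 →
      l • x + m • y ∈ B)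
    {x : Fin n → ℝ} (hx : x ∈ B) {l : ℝ} (hl0 : 0 ≤ l) (hl1 : l ≤ 1) :
    l • x ∈ B := by
  have hlp : l ^ p ≤ 1 := Real.rpow_le_one hl0 hl1 hp.le
  have hm0 : (0:ℝ) ≤ (1 - l ^ p) ^ p⁻¹ := Real.rpow_nonneg (by linarith) _
  have hmp : ((1 - l ^ p) ^ p⁻¹) ^ p = 1 - l ^ p := by
    rw [← Real.rpow_mul (by linarith), inv_mul_cancel₀ hp.ne', Real.rpow_one]
  have := hpc x hx 0 h0 l ((1 - l ^ p) ^ p⁻¹) hl0 hm0 (by rw [hmp]; ring)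
  simpa using this

-- p-norm bound on arbitrary nonnegative linear combinations
lemma pball_comb {n : ℕ} {p : ℝ} (hp : 0 < p) {B : Set (Fin n → ℝ)}
    (h0 : (0 : Fin n → ℝ) ∈ B)
    (hpc : ∀ x ∈ B, ∀ y ∈ B, ∀ l m : ℝ, 0 ≤ l → 0 ≤ m → l ^ p + m ^ p = 1 →
      l • x + m • y ∈ B)
    {ι : Type} (s : Finset ι) (z : ι → Fin n → ℝ) (w : ι → ℝ)
    (hz : ∀ i ∈ s, z i ∈ B) (hw : ∀ i ∈ s, 0 ≤ w i) :
    ∃ b ∈ B, ∑ i ∈ s, w i • z i = ((∑ i ∈ s, w i ^ p) ^ p⁻¹) • b := by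
  classical
  induction s using Finset.induction_on with
  | empty =>
    exact ⟨0, h0, by simp [Real.zero_rpow (inv_ne_zero hp.ne')]⟩
  | @insert a s ha ih =>
    obtain ⟨b, hb, hsum⟩ := ih (fun i hi => hz i (Finset.mem_insert_of_mem hi))
      (fun i hi => hw i (Finset.mem_insert_of_mem hi))
    have hwa : 0 ≤ w a := hw a (Finset.mem_insert_self _ _)
    have hS0 : 0 ≤ ∑ i ∈ s, w i ^ p :=
      Finset.sum_nonneg fun i hi => Real.rpow_nonneg (hw i (Finset.mem_insert_of_mem hi)) _
    set S : ℝ := ∑ i ∈ s, w i ^ p with hSdef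
    have hwap : 0 ≤ w a ^ p := Real.rpow_nonneg hwa _
    rw [Finset.sum_insert ha, Finset.sum_insert ha, hsum]
    by_cases hT : w a ^ p + S = 0
    · have h1 : w a ^ p = 0 := by linarith
      have h2 : S = 0 := by linarith
      have hwa0 : w a = 0 := (Real.rpow_eq_zero hwa hp.ne').mp h1
      refine ⟨0, h0, ?_⟩
      rw [hT, hwa0, h2, Real.zero_rpow (inv_ne_zero hp.ne')]
      simp
    · have hTpos : 0 < w a ^ p + S := lt_of_le_of_ne (by linarith) (Ne.symm hT)
      set t : ℝ := (w a ^ p + S) ^ p⁻¹ with htdef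
      have ht : 0 < t := Real.rpow_pos_of_pos hTpos _
      have htp : t ^ p = w a ^ p + S := by
        rw [htdef, ← Real.rpow_mul hTpos.le, inv_mul_cancel₀ hp.ne', Real.rpow_one]
      set l : ℝ := w a / t
      set m : ℝ := S ^ p⁻¹ / t
      have hl0 : 0 ≤ l := div_nonneg hwa ht.le
      have hm0 : 0 ≤ m := div_nonneg (Real.rpow_nonneg hS0 _) ht.le
      have hlp : l ^ p = w a ^ p / t ^ p := Real.div_rpow hwa ht.le p
      have hmp : m ^ p = S / t ^ p := by
        rw [Real.div_rpow (Real.rpow_nonneg hS0 _) ht.le,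
          ← Real.rpow_mul hS0, inv_mul_cancel₀ hp.ne', Real.rpow_one]
      have hsum1 : l ^ p + m ^ p = 1 := by
        rw [hlp, hmp, ← add_div, htp, div_self hT]
      refine ⟨l • z a + m • b, hpc _ (hz a (Finset.mem_insert_self _ _)) _ hb l m hl0 hm0 hsum1, ?_⟩
      rw [smul_add, smul_smul, smul_smul, mul_div_cancel₀ _ ht.ne', mul_div_cancel₀ _ ht.ne']

-- power-mean inequality: ∑ wᵢ^p ≤ k^(1-p) when ∑ wᵢ ≤ 1, 0 < p ≤ 1
lemma sum_rpow_le_card {ι : Type} {p : ℝ} (hp : 0 < p) (hp1 : p ≤ 1)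
    (s : Finset ι) (w : ι → ℝ) (hw : ∀ i ∈ s, 0 ≤ w i) (hs : ∑ i ∈ s, w i ≤ 1) :
    ∑ i ∈ s, w i ^ p ≤ (s.card : ℝ) ^ (1 - p) := by
  rcases s.eq_empty_or_nonempty with rfl | hne
  · simpa using Real.rpow_nonneg (by norm_num) (1 - p)
  have hk : (0:ℝ) < s.card := by exact_mod_cast Finset.card_pos.mpr hne
  have hq : (1:ℝ) ≤ p⁻¹ := (one_le_inv₀ hp).2 hp1
  have key := Real.arith_mean_le_rpow_mean s (fun _ => (s.card : ℝ)⁻¹)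
    (fun i => w i ^ p) (fun i _ => by positivity)
    (by simp [Finset.sum_const, mul_inv_cancel₀ hk.ne'])
    (fun i hi => Real.rpow_nonneg (hw i hi) _) hq
  have hiter : ∀ i ∈ s, ((s.card : ℝ))⁻¹ * (w i ^ p) ^ p⁻¹ = ((s.card : ℝ))⁻¹ * w i :=
    fun i hi => by
      rw [← Real.rpow_mul (hw i hi), mul_inv_cancel₀ hp.ne', Real.rpow_one]
  rw [one_div, inv_inv, Finset.sum_congr rfl hiter] at key
  -- key : ∑ (card)⁻¹ * w i ^ p ≤ (∑ (card)⁻¹ * w i) ^ p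
  rw [← Finset.mul_sum, ← Finset.mul_sum] at key
  have h2 : ((s.card : ℝ)⁻¹ * ∑ i ∈ s, w i) ^ p ≤ ((s.card : ℝ)⁻¹) ^ p := by
    have : (s.card : ℝ)⁻¹ * ∑ i ∈ s, w i ≤ (s.card : ℝ)⁻¹ := by
      nlinarith [Finset.sum_nonneg hw, inv_pos.mpr hk]
    exact Real.rpow_le_rpow (mul_nonneg (inv_pos.mpr hk).le (Finset.sum_nonneg hw)) this hp.le
  have h3 : (s.card : ℝ)⁻¹ * ∑ i ∈ s, w i ^ p ≤ ((s.card : ℝ)⁻¹) ^ p := le_trans key h2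
  have h4 : ((s.card : ℝ)⁻¹) ^ p = (s.card : ℝ) ^ (-p) := by
    rw [Real.inv_rpow hk.le, ← Real.rpow_neg hk.le]
  calc ∑ i ∈ s, w i ^ p = (s.card : ℝ) * ((s.card : ℝ)⁻¹ * ∑ i ∈ s, w i ^ p) := by
        field_simp
    _ ≤ (s.card : ℝ) * (s.card : ℝ) ^ (-p) := by
        rw [← h4]; exact mul_le_mul_of_nonneg_left h3 hk.le
    _ = (s.card : ℝ) ^ (1 - p) := by
        rw [sub_eq_add_neg, Real.rpow_add hk, Real.rpow_one]

-- Carathéodory with at most n points and total weight ≤ 1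
lemma carath_aux {n : ℕ} {B : Set (Fin n → ℝ)} {x : Fin n → ℝ}
    (hx : x ∈ convexHull ℝ B) :
    ∃ (ι : Type) (_ : Fintype ι) (s : Finset ι) (z : ι → Fin n → ℝ) (w : ι → ℝ),
      s.card ≤ n ∧ (∀ i ∈ s, z i ∈ B) ∧ (∀ i ∈ s, 0 ≤ w i) ∧
      ∑ i ∈ s, w i ≤ 1 ∧ ∑ i ∈ s, w i • z i = x := by
  classical
  obtain ⟨ι, hι, z, w, hzB, hai, hw0, hw1, hwx⟩ := eq_pos_convex_span_of_mem_convexHull hx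
  have hzB' : ∀ i, z i ∈ B := fun i => hzB (Set.mem_range_self i)
  by_cases hcard : Fintype.card ι ≤ n
  · exact ⟨ι, hι, Finset.univ, z, w, by simpa using hcard, fun i _ => hzB' i,
      fun i _ => (hw0 i).le, le_of_eq hw1, hwx⟩
  · have hle : Fintype.card ι ≤ n + 1 := by
      have := hai.card_le_finrank_succ (k := ℝ)
      have hfr : Module.finrank ℝ ↥(vectorSpan ℝ (Set.range z)) ≤ n := by
        calc Module.finrank ℝ ↥(vectorSpan ℝ (Set.range z))
            ≤ Module.finrank ℝ (Fin n → ℝ) := Submodule.finrank_le _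
          _ = n := Module.finrank_fin_fun ℝ
      omega
    have hcard' : Fintype.card ι = n + 1 := by omega
    have htop : affineSpan ℝ (Set.range z) = ⊤ := by
      rw [hai.affineSpan_eq_top_iff_card_eq_finrank_add_one, hcard', Module.finrank_fin_fun]
    have h0span : (0 : Fin n → ℝ) ∈ affineSpan ℝ (Set.range z) := by
      rw [htop]; trivial
    obtain ⟨w', hw'1, hw'0⟩ := eq_affineCombination_of_mem_affineSpan_of_fintype h0span
    have hw'z : ∑ i, w' i • z i = 0 := by
      rw [← Finset.univ.affineCombination_eq_linear_combination z w' hw'1, ← hw'0]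
    -- pick the minimizing index j
    have hSne : (Finset.univ.filter (fun i => 0 < w' i)).Nonempty := by
      by_contra h
      rw [Finset.not_nonempty_iff_eq_empty, Finset.filter_eq_empty_iff] at h
      have : ∑ i, w' i ≤ 0 := Finset.sum_nonpos fun i _ => le_of_not_gt (h (Finset.mem_univ i))
      linarith
    obtain ⟨j, hjS, hjmin⟩ := Finset.exists_min_image _ (fun i => w i / w' i) hSne
    have hw'j : 0 < w' j := (Finset.mem_filter.mp hjS).2
    set c : ℝ := w j / w' j with hcdef
    have hc0 : 0 < c := div_pos (hw0 j) hw'j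
    set μ : ι → ℝ := fun i => w i - c * w' i with hμdef
    have hμ0 : ∀ i, 0 ≤ μ i := by
      intro i
      by_cases hi : 0 < w' i
      · have := hjmin i (Finset.mem_filter.mpr ⟨Finset.mem_univ i, hi⟩)
        have h2 : c * w' i ≤ w i := by
          rw [div_le_div_iff₀ hw'j hi] at this
          rw [hcdef, div_mul_eq_mul_div, div_le_iff₀ hw'j]
          linarith
        simpa [hμdef] using sub_nonneg.mpr h2
      · have h1 : c * w' i ≤ 0 := mul_nonpos_of_nonneg_of_nonpos hc0.le (le_of_not_gt hi)
        have := (hw0 i).le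
        simp only [hμdef]
        linarith
    have hμj : μ j = 0 := by
      simp only [hμdef, hcdef]
      field_simp
      ring
    refine ⟨ι, hι, Finset.univ.erase j, z, μ, ?_, fun i _ => hzB' i, fun i _ => hμ0 i, ?_, ?_⟩
    · rw [Finset.card_erase_of_mem (Finset.mem_univ j), Finset.card_univ, hcard']
      omega
    · rw [Finset.sum_erase_eq_sub (Finset.mem_univ j), hμj, sub_zero]
      simp only [hμdef]
      rw [Finset.sum_sub_distrib, hw1, ← Finset.mul_sum, hw'1, mul_one]
      linarith
    · rw [Finset.sum_erase_eq_sub (Finset.mem_univ j), hμj, zero_smul, sub_zero]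
      simp only [hμdef, sub_smul, mul_smul]
      rw [Finset.sum_sub_distrib, hwx, ← Finset.smul_sum, hw'z, smul_zero, sub_zero]

/-- If `B` is a `p`-ball in `ℝⁿ` then `B ⊆ conv(B) ⊆ n^(1/p - 1) · B`. -/
theorem pBall_convexHull_subset (n : ℕ) (p : ℝ) (hp : 0 < p) (hp1 : p ≤ 1)
    (B : Set (Fin n → ℝ)) (hB : IsPBall n p B) :
    B ⊆ convexHull ℝ B ∧ convexHull ℝ B ⊆ ((n : ℝ) ^ ((1 : ℝ) / p - 1)) • B := by
  obtain ⟨hcomp, hsymm, hint, hpc⟩ := hB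
  have h0 : (0 : Fin n → ℝ) ∈ B := interior_subset hint
  refine ⟨subset_convexHull ℝ B, ?_⟩
  intro x hx
  obtain ⟨ι, hι, s, z, w, hcard, hzB, hw0, hwsum, hwx⟩ := carath_aux hx
  obtain ⟨b, hb, hsum⟩ := pball_comb hp h0 hpc s z w hzB hw0
  set T : ℝ := (∑ i ∈ s, w i ^ p) ^ p⁻¹ with hTdef
  have hT0 : 0 ≤ T := Real.rpow_nonneg
    (Finset.sum_nonneg fun i hi => Real.rpow_nonneg (hw0 i hi) _) _
  set c : ℝ := (n : ℝ) ^ ((1 : ℝ) / p - 1) with hcdef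
  have hxT : x = T • b := by rw [← hwx, hsum]
  have hTc : T ≤ c := by
    have h1 : ∑ i ∈ s, w i ^ p ≤ (s.card : ℝ) ^ (1 - p) :=
      sum_rpow_le_card hp hp1 s w hw0 hwsum
    have h2 : (s.card : ℝ) ^ (1 - p) ≤ (n : ℝ) ^ (1 - p) :=
      Real.rpow_le_rpow (Nat.cast_nonneg _) (Nat.cast_le.mpr hcard) (by linarith)
    have h3 : T ≤ ((n : ℝ) ^ (1 - p)) ^ p⁻¹ :=
      Real.rpow_le_rpow (Finset.sum_nonneg fun i hi => Real.rpow_nonneg (hw0 i hi) _)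
        (h1.trans h2) (inv_nonneg.mpr hp.le)
    have h4 : ((n : ℝ) ^ (1 - p)) ^ p⁻¹ = c := by
      rw [hcdef, ← Real.rpow_mul (Nat.cast_nonneg n)]
      congr 1
      field_simp
    rwa [h4] at h3
  by_cases hT : T = 0
  · rw [hxT, hT, zero_smul]
    exact ⟨0, h0, by simp⟩
  · have hTpos : 0 < T := lt_of_le_of_ne hT0 (Ne.symm hT)
    have hcpos : 0 < c := lt_of_lt_of_le hTpos hTc
    refine ⟨(T / c) • b, pball_star hp h0 hpc hb (div_nonneg hT0 hcpos.le)
      ((div_le_one hcpos).mpr hTc), ?_⟩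
    show c • ((T / c) • b) = x
    rw [smul_smul, mul_div_cancel₀ _ hcpos.ne', ← hxT]
end

section
/- Milman-ellipsoid theorem for p-balls: assuming Milman's ellipsoid theorem for symmetric convex bodies (for every symmetric convex body K ⊆ ℝⁿ there is an ellipsoid D with M(K, D) ≤ C universal), there exists C_p > 0 depending only on p such that for every p-ball B ⊆ ℝⁿ there is an ellipsoid D with M(B, D) ≤ C_p · n^(1/p − 1). -/
open MeasureTheory Set Pointwise ENNReal

noncomputable section

/-- The polar set `B° = {x : ⟨x,y⟩ ≤ 1 for all y ∈ B}`. -/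
def polarSet (n : ℕ) (B : Set (Fin n → ℝ)) : Set (Fin n → ℝ) :=
  {x | ∀ y ∈ B, ∑ i, x i * y i ≤ 1}

/-- The Euclidean unit ball of `ℝⁿ`. -/
def euclBall (n : ℕ) : Set (Fin n → ℝ) := {x | ∑ i, x i ^ 2 ≤ 1}

/-- The volume product `s(B) = (|B| · |B°|)^(1/n)`. -/
def sVol (n : ℕ) (B : Set (Fin n → ℝ)) : ℝ :=
  ((volume B).toReal * (volume (polarSet n B)).toReal) ^ ((1 : ℝ) / n)

/-- `M(B,D) = ((|B+D|/|B∩D|) · (|B°+D°|/|B°∩D°|))^(1/n)`. -/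
def MVol (n : ℕ) (B D : Set (Fin n → ℝ)) : ℝ :=
  (((volume (B + D)).toReal / (volume (B ∩ D)).toReal) *
    ((volume (polarSet n B + polarSet n D)).toReal /
      (volume (polarSet n B ∩ polarSet n D)).toReal)) ^ ((1 : ℝ) / n)

/-- `D` is a (centered) ellipsoid: a linear image of the Euclidean unit ball. -/
def IsEllipsoid (n : ℕ) (D : Set (Fin n → ℝ)) : Prop :=
  ∃ u : (Fin n → ℝ) ≃ₗ[ℝ] (Fin n → ℝ), D = u '' euclBall n

lemma convex_euclBall (n : ℕ) : Convex ℝ (euclBall n) := by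
  intro x hx y hy a b ha hb hab
  simp only [euclBall, mem_setOf_eq] at hx hy ⊢
  have key : ∀ i : Fin n, (a • x + b • y) i ^ 2 ≤ a * x i ^ 2 + b * y i ^ 2 := by
    intro i
    have h : (a • x + b • y) i = a * x i + b * y i := rfl
    rw [h]
    nlinarith [mul_nonneg (mul_nonneg ha hb) (sq_nonneg (x i - y i))]
  calc ∑ i, (a • x + b • y) i ^ 2 ≤ ∑ i, (a * x i ^ 2 + b * y i ^ 2) :=
        Finset.sum_le_sum fun i _ => key i
    _ = a * ∑ i, x i ^ 2 + b * ∑ i, y i ^ 2 := by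
        rw [Finset.sum_add_distrib, Finset.mul_sum, Finset.mul_sum]
    _ ≤ a * 1 + b * 1 := by
        gcongr
    _ = 1 := by linarith

lemma isCompact_euclBall (n : ℕ) : IsCompact (euclBall n) := by
  have hcont : Continuous fun x : Fin n → ℝ => ∑ i, x i ^ 2 :=
    continuous_finset_sum _ fun i _ => (continuous_apply i).pow 2
  have hcl : IsClosed (euclBall n) := isClosed_le hcont continuous_const
  have hb : Bornology.IsBounded (euclBall n) := by
    refine (Metric.isBounded_closedBall (x := (0 : Fin n → ℝ)) (r := 1)).subset ?_
    intro x hx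
    simp only [Metric.mem_closedBall, dist_zero_right]
    rw [pi_norm_le_iff_of_nonneg zero_le_one]
    intro i
    rw [Real.norm_eq_abs, ← sq_le_one_iff_abs_le_one]
    exact le_trans (Finset.single_le_sum (fun j _ => sq_nonneg (x j)) (Finset.mem_univ i)) hx
  exact Metric.isCompact_of_isClosed_isBounded hcl hb

lemma zero_mem_interior_euclBall (n : ℕ) : (0 : Fin n → ℝ) ∈ interior (euclBall n) := by
  have hcont : Continuous fun x : Fin n → ℝ => ∑ i, x i ^ 2 :=
    continuous_finset_sum _ fun i _ => (continuous_apply i).pow 2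
  exact mem_interior.mpr ⟨{x | ∑ i, x i ^ 2 < 1}, fun x hx => le_of_lt (mem_setOf_eq ▸ hx),
    isOpen_lt hcont continuous_const, by simp⟩

lemma ellipsoid_facts {n : ℕ} {D : Set (Fin n → ℝ)} (hD : IsEllipsoid n D) :
    IsCompact D ∧ Convex ℝ D ∧ (0 : Fin n → ℝ) ∈ interior D := by
  obtain ⟨u, rfl⟩ := hD
  have he : ⇑u.toContinuousLinearEquiv.toHomeomorph = ⇑u := by ext x; simp
  refine ⟨?_, ?_, ?_⟩
  · have := (isCompact_euclBall n).image u.toContinuousLinearEquiv.continuous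
    simpa using this
  · have := (convex_euclBall n).linear_image u.toLinearMap
    simpa using this
  · have h := u.toContinuousLinearEquiv.toHomeomorph.image_interior (euclBall n)
    rw [he] at h
    rw [← h]
    exact ⟨0, zero_mem_interior_euclBall n, map_zero u⟩

lemma subset_smul_of_one_le {n : ℕ} {D : Set (Fin n → ℝ)} (hD : Convex ℝ D)
    (h0 : (0 : Fin n → ℝ) ∈ D) {c : ℝ} (hc : 1 ≤ c) : D ⊆ c • D := by
  intro x hx
  have hc0 : (0 : ℝ) < c := lt_of_lt_of_le one_pos hc
  rw [Set.mem_smul_set_iff_inv_smul_mem₀ hc0.ne']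
  have h1 : (0 : ℝ) ≤ c⁻¹ := by positivity
  have h2 : (0 : ℝ) ≤ 1 - c⁻¹ := by
    rw [sub_nonneg]
    exact inv_le_one_of_one_le₀ hc
  have := hD hx h0 h1 h2 (by ring)
  simpa using this

lemma sum_rpow_le_card_rpow {p : ℝ} (hp : 0 < p) (hp1 : p < 1) {ι : Type*} (t : Finset ι)
    (w : ι → ℝ) (hw0 : ∀ i ∈ t, 0 ≤ w i) (hw1 : ∑ i ∈ t, w i = 1) :
    ∑ i ∈ t, w i ^ p ≤ (t.card : ℝ) ^ (1 - p) := by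
  have hpq : Real.HolderConjugate (1/p) (1/(1-p)) := by
    rw [Real.holderConjugate_iff]
    constructor
    · exact one_lt_one_div hp hp1
    · rw [one_div, one_div, inv_inv, inv_inv]; ring
  calc ∑ i ∈ t, w i ^ p = ∑ i ∈ t, (w i ^ p) * 1 := by simp
    _ ≤ (∑ i ∈ t, (w i ^ p) ^ (1/p)) ^ (1/(1/p)) *
        (∑ i ∈ t, (1:ℝ) ^ (1/(1-p))) ^ (1/(1/(1-p))) :=
      Real.inner_le_Lp_mul_Lq_of_nonneg t hpq
        (fun i hi => Real.rpow_nonneg (hw0 i hi) p) (fun i _ => zero_le_one)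
    _ = (t.card : ℝ) ^ (1 - p) := by
      have h1 : ∀ i ∈ t, (w i ^ p) ^ (1/p) = w i := by
        intro i hi
        rw [← Real.rpow_mul (hw0 i hi), mul_one_div_cancel hp.ne', Real.rpow_one]
      rw [Finset.sum_congr rfl h1, hw1, Real.one_rpow, one_mul]
      simp only [Real.one_rpow, Finset.sum_const, nsmul_eq_mul, mul_one, one_div_one_div]

lemma pconv_sum {n : ℕ} {p : ℝ} (hp : 0 < p) {B : Set (Fin n → ℝ)}
    (h0 : (0 : Fin n → ℝ) ∈ B)
    (hpc : ∀ x ∈ B, ∀ y ∈ B, ∀ l m : ℝ, 0 ≤ l → 0 ≤ m → l ^ p + m ^ p = 1 →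
      l • x + m • y ∈ B)
    {ι : Type*} (t : Finset ι) (μ : ι → ℝ) (z : ι → Fin n → ℝ)
    (hz : ∀ i, z i ∈ B) (hμ : ∀ i ∈ t, 0 ≤ μ i) (hsum : ∑ i ∈ t, μ i ^ p ≤ 1) :
    ∑ i ∈ t, μ i • z i ∈ B := by
  classical
  induction t using Finset.cons_induction generalizing μ with
  | empty => simpa using h0
  | cons a t ha IH =>
    rw [Finset.sum_cons] at hsum ⊢
    have hA : 0 ≤ μ a := hμ a (Finset.mem_cons_self a t)
    have hμt : ∀ i ∈ t, 0 ≤ μ i := fun i hi => hμ i (Finset.mem_cons_of_mem hi)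
    have hTnn : 0 ≤ ∑ i ∈ t, μ i ^ p :=
      Finset.sum_nonneg fun i hi => Real.rpow_nonneg (hμt i hi) p
    have hAp1 : μ a ^ p ≤ 1 := by linarith
    have hApnn : 0 ≤ μ a ^ p := Real.rpow_nonneg hA p
    set l := (1 - μ a ^ p) ^ (1/p) with hl_def
    have hl0 : 0 ≤ l := Real.rpow_nonneg (by linarith) _
    have hlp : l ^ p = 1 - μ a ^ p := by
      rw [hl_def, ← Real.rpow_mul (by linarith), one_div_mul_cancel hp.ne', Real.rpow_one]
    rcases eq_or_lt_of_le hl0 with hl | hl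
    · -- l = 0 : μ a = 1 and all other μ vanish
      have h1 : μ a ^ p = 1 := by
        have h2 : (0:ℝ) ^ p = 1 - μ a ^ p := by rw [hl]; exact hlp
        rw [Real.zero_rpow hp.ne'] at h2
        linarith
      have hμa : μ a = 1 := by
        have h3 : (μ a ^ p) ^ (1/p) = (1:ℝ) ^ (1/p) := by rw [h1]
        rwa [← Real.rpow_mul hA, mul_one_div_cancel hp.ne', Real.rpow_one,
          Real.one_rpow] at h3
      have ht0 : ∀ i ∈ t, μ i = 0 := by
        intro i hi
        have hle := Finset.single_le_sum
          (fun j hj => Real.rpow_nonneg (hμt j hj) p) hi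
        have h4 : μ i ^ p = 0 := le_antisymm (by linarith) (Real.rpow_nonneg (hμt i hi) p)
        exact (Real.rpow_eq_zero (hμt i hi) hp.ne').mp h4
      rw [Finset.sum_eq_zero (fun i hi => by rw [ht0 i hi, zero_smul]), add_zero, hμa, one_smul]
      exact hz a
    · -- 0 < l
      have hw : ∑ i ∈ t, (μ i / l) • z i ∈ B := by
        apply IH (fun i => μ i / l) (fun i hi => div_nonneg (hμt i hi) hl0)
        have hdiv : ∑ i ∈ t, (μ i / l) ^ p = (∑ i ∈ t, μ i ^ p) / l ^ p := by
          rw [Finset.sum_div]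
          exact Finset.sum_congr rfl fun i hi => Real.div_rpow (hμt i hi) hl0 p
        rw [hdiv, div_le_one (Real.rpow_pos_of_pos hl p), hlp]
        linarith
      have hkey := hpc (z a) (hz a) _ hw (μ a) l hA hl0 (by rw [hlp]; ring)
      have heq : l • ∑ i ∈ t, (μ i / l) • z i = ∑ i ∈ t, μ i • z i := by
        rw [Finset.smul_sum]
        exact Finset.sum_congr rfl fun i hi => by
          rw [smul_smul, mul_div_cancel₀ _ hl.ne']
      rwa [heq] at hkey

lemma polarSet_closure_convexHull (n : ℕ) (B : Set (Fin n → ℝ)) :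
    polarSet n (closure (convexHull ℝ B)) = polarSet n B := by
  apply Set.Subset.antisymm
  · intro x hx y hy
    exact hx y (subset_closure (subset_convexHull ℝ B hy))
  · intro x hx y hy
    have hlin : IsLinearMap ℝ fun y : Fin n → ℝ => ∑ i, x i * y i := by
      constructor
      · intro a b
        simp [mul_add, Finset.sum_add_distrib]
      · intro c a
        simp [Finset.mul_sum, mul_left_comm, mul_comm, mul_assoc]
    have hconv : Convex ℝ {y : Fin n → ℝ | ∑ i, x i * y i ≤ 1} :=
      convex_halfSpace_le hlin 1
    have hcont : Continuous fun y : Fin n → ℝ => ∑ i, x i * y i :=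
      continuous_finset_sum _ fun i _ => continuous_const.mul (continuous_apply i)
    have hclosed : IsClosed {y : Fin n → ℝ | ∑ i, x i * y i ≤ 1} :=
      isClosed_le hcont continuous_const
    have hsub : closure (convexHull ℝ B) ⊆ {y : Fin n → ℝ | ∑ i, x i * y i ≤ 1} :=
      closure_minimal (convexHull_min (fun z hz => hx z hz) hconv) hclosed
    exact hsub hy

lemma convexHull_subset_smul {n : ℕ} {p : ℝ} (hp : 0 < p) (hp1 : p < 1)
    {B : Set (Fin n → ℝ)} (h0 : (0 : Fin n → ℝ) ∈ B)
    (hpc : ∀ x ∈ B, ∀ y ∈ B, ∀ l m : ℝ, 0 ≤ l → 0 ≤ m → l ^ p + m ^ p = 1 →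
      l • x + m • y ∈ B) :
    convexHull ℝ B ⊆ (((n : ℝ) + 1) ^ ((1:ℝ)/p - 1)) • B := by
  classical
  intro x hx
  set c : ℝ := ((n : ℝ) + 1) ^ ((1:ℝ)/p - 1) with hc_def
  have he0 : (0:ℝ) ≤ 1/p - 1 := by
    rw [sub_nonneg]
    rw [le_div_iff₀ hp, one_mul]
    exact hp1.le
  have hc1 : (1:ℝ) ≤ c := Real.one_le_rpow (by have := Nat.cast_nonneg (α := ℝ) n; linarith) he0
  have hc0 : (0:ℝ) < c := lt_of_lt_of_le one_pos hc1
  rw [convexHull_eq_union] at hx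
  simp only [Set.mem_iUnion] at hx
  obtain ⟨t, hts, hai, hxt⟩ := hx
  have hcard : (t.card : ℝ) ≤ (n : ℝ) + 1 := by
    have h1 := hai.card_le_finrank_succ
    rw [Fintype.card_coe] at h1
    have h2 : Module.finrank ℝ (vectorSpan ℝ (Set.range ((↑) : t → (Fin n → ℝ)))) ≤ n := by
      have := Submodule.finrank_le (vectorSpan ℝ (Set.range ((↑) : t → (Fin n → ℝ))))
      rwa [Module.finrank_fin_fun] at this
    exact_mod_cast le_trans h1 (by omega)
  rw [Finset.convexHull_eq] at hxt
  obtain ⟨w, hw0, hw1, hxw⟩ := hxt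
  rw [Finset.centerMass_eq_of_sum_1 _ _ hw1] at hxw
  simp only [id] at hxw
  rw [Set.mem_smul_set_iff_inv_smul_mem₀ hc0.ne', ← hxw, Finset.smul_sum]
  have heq : ∀ y ∈ t, c⁻¹ • (w y • y) = (w y / c) • (fun z : Fin n → ℝ => if z ∈ B then z else 0) y := by
    intro y hy
    have hyB : y ∈ B := hts hy
    simp only [hyB, if_pos, smul_smul]
    congr 1
    ring
  rw [Finset.sum_congr rfl heq]
  apply pconv_sum hp h0 hpc t (fun y => w y / c) _ (fun y => by
      by_cases h : y ∈ B
      · simpa [h] using h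
      · simpa [h] using h0)
    (fun y hy => div_nonneg (hw0 y hy) hc0.le)
  have hdp : ∀ y ∈ t, (w y / c) ^ p = w y ^ p / c ^ p :=
    fun y hy => Real.div_rpow (hw0 y hy) hc0.le p
  rw [Finset.sum_congr rfl hdp, ← Finset.sum_div, div_le_one (Real.rpow_pos_of_pos hc0 p)]
  have hcp : c ^ p = ((n:ℝ) + 1) ^ (1 - p) := by
    rw [hc_def, ← Real.rpow_mul (by positivity)]
    congr 1
    field_simp
  calc ∑ y ∈ t, w y ^ p ≤ (t.card : ℝ) ^ (1 - p) :=
        sum_rpow_le_card_rpow hp hp1 t w hw0 hw1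
    _ ≤ ((n:ℝ) + 1) ^ (1 - p) := Real.rpow_le_rpow (by positivity) hcard (by linarith)
    _ = c ^ p := hcp.symm

/-- Milman-ellipsoid theorem for `p`-balls (conditional on Milman's ellipsoid theorem
for symmetric convex bodies): there is `C_p > 0` such that every `p`-ball `B ⊆ ℝⁿ`
admits an ellipsoid `D` with `M(B, D) ≤ C_p · n^(1/p - 1)`. -/
theorem pBall_milman_ellipsoid (p : ℝ) (hp : 0 < p) (hp1 : p < 1)
    (hMil : ∃ C : ℝ, 0 < C ∧ ∀ n : ℕ, 0 < n → ∀ K : Set (Fin n → ℝ),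
      IsCompact K → K = -K → Convex ℝ K → (0 : Fin n → ℝ) ∈ interior K →
      ∃ D : Set (Fin n → ℝ), IsEllipsoid n D ∧ MVol n K D ≤ C) :
    ∃ Cp : ℝ, 0 < Cp ∧ ∀ n : ℕ, 0 < n → ∀ B : Set (Fin n → ℝ), IsPBall n p B →
      ∃ D : Set (Fin n → ℝ), IsEllipsoid n D ∧
        MVol n B D ≤ Cp * (n : ℝ) ^ ((1 : ℝ) / p - 1) := by
  obtain ⟨C, hC, hmil⟩ := hMil
  refine ⟨C * 2 ^ ((1:ℝ)/p - 1), by positivity, ?_⟩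
  intro n hn B hB
  obtain ⟨hBc, hBs, hB0, hBp⟩ := hB
  have h0B : (0 : Fin n → ℝ) ∈ B := interior_subset hB0
  set K := closure (convexHull ℝ B) with hK
  have hKconv : Convex ℝ K := (convex_convexHull ℝ B).closure
  have hKcomp : IsCompact K := Metric.isCompact_of_isClosed_isBounded isClosed_closure
    ((isBounded_convexHull.mpr hBc.isBounded).closure)
  have hKsym : K = -K := by
    rw [hK]
    nth_rewrite 1 [hBs]
    rw [convexHull_neg, ← neg_closure]
  have hBK : B ⊆ K := (subset_convexHull ℝ B).trans subset_closure
  have hK0 : (0 : Fin n → ℝ) ∈ interior K := interior_mono hBK hB0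
  obtain ⟨D, hDell, hMKD⟩ := hmil n hn K hKcomp hKsym hKconv hK0
  refine ⟨D, hDell, ?_⟩
  obtain ⟨hDcomp, hDconv, hD0⟩ := ellipsoid_facts hDell
  -- the dilation constant
  set c : ℝ := ((n : ℝ) + 1) ^ ((1:ℝ)/p - 1) with hc_def
  have he0 : (0:ℝ) ≤ 1/p - 1 := by
    rw [sub_nonneg, le_div_iff₀ hp, one_mul]
    exact hp1.le
  have hc1 : (1:ℝ) ≤ c := Real.one_le_rpow (by have := Nat.cast_nonneg (α := ℝ) n; linarith) he0
  have hc0 : (0:ℝ) < c := lt_of_lt_of_le one_pos hc1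
  -- K ⊆ c • B
  have hKB : K ⊆ c • B := by
    have h1 : convexHull ℝ B ⊆ c • B := convexHull_subset_smul hp hp1 h0B hBp
    have h2 : IsClosed (c • B) := by
      have h3 : IsCompact ((fun x : Fin n → ℝ => c • x) '' B) :=
        hBc.image (continuous_const_smul c)
      rw [Set.image_smul] at h3
      exact h3.isClosed
    exact closure_minimal h1 h2
  have hpolar : polarSet n K = polarSet n B := polarSet_closure_convexHull n B
  -- intersection inclusion
  have hKD_sub : K ∩ D ⊆ c • (B ∩ D) := by
    rw [Set.smul_set_inter₀ hc0.ne']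
    exact fun x hx => ⟨hKB hx.1, subset_smul_of_one_le hDconv
      (interior_subset hD0) hc1 hx.2⟩
  -- volume abbreviations
  set a : ℝ := (volume (B + D)).toReal with ha_def
  set a' : ℝ := (volume (K + D)).toReal with ha'_def
  set b : ℝ := (volume (B ∩ D)).toReal with hb_def
  set b' : ℝ := (volume (K ∩ D)).toReal with hb'_def
  set P : ℝ := (volume (polarSet n B + polarSet n D)).toReal /
      (volume (polarSet n B ∩ polarSet n D)).toReal with hP_def
  have hKD_fin : volume (K + D) ≠ ⊤ := (hKcomp.add hDcomp).measure_lt_top.ne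
  have hBDi_fin : volume (B ∩ D) ≠ ⊤ :=
    (lt_of_le_of_lt (measure_mono Set.inter_subset_left) hBc.measure_lt_top).ne
  have hKDi_fin : volume (K ∩ D) ≠ ⊤ :=
    (lt_of_le_of_lt (measure_mono Set.inter_subset_left) hKcomp.measure_lt_top).ne
  have haa' : a ≤ a' := ENNReal.toReal_mono hKD_fin
    (measure_mono (Set.add_subset_add_right hBK))
  have hb_pos : 0 < b := by
    rw [hb_def]
    apply ENNReal.toReal_pos _ hBDi_fin
    have hioint : (0 : Fin n → ℝ) ∈ interior (B ∩ D) := by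
      rw [interior_inter]; exact ⟨hB0, hD0⟩
    have hne : (interior (B ∩ D)).Nonempty := ⟨0, hioint⟩
    exact ((isOpen_interior.measure_pos volume hne).trans_le
      (measure_mono interior_subset)).ne'
  have hbb' : b ≤ b' := ENNReal.toReal_mono hKDi_fin
    (measure_mono (Set.inter_subset_inter_left D hBK))
  have hb'_pos : 0 < b' := lt_of_lt_of_le hb_pos hbb'
  have hb'c : b' ≤ c ^ n * b := by
    have h1 : volume (K ∩ D) ≤ volume (c • (B ∩ D)) := measure_mono hKD_sub
    rw [Measure.addHaar_smul volume c (B ∩ D), Module.finrank_fin_fun,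
      abs_of_nonneg (pow_nonneg hc0.le n)] at h1
    have h2 := ENNReal.toReal_mono
      (ENNReal.mul_ne_top ENNReal.ofReal_ne_top hBDi_fin) h1
    rwa [ENNReal.toReal_mul, ENNReal.toReal_ofReal (pow_nonneg hc0.le n)] at h2
  have hP0 : 0 ≤ P := div_nonneg ENNReal.toReal_nonneg ENNReal.toReal_nonneg
  have ha'0 : 0 ≤ a' := ENNReal.toReal_nonneg
  -- core inequality
  have hcore : (a / b) * P ≤ c ^ n * ((a' / b') * P) := by
    have h1 : a / b ≤ c ^ n * (a' / b') := by
      rw [mul_div_assoc' (c ^ n) a' b', div_le_div_iff₀ hb_pos hb'_pos]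
      calc a * b' ≤ a' * (c ^ n * b) := by
            apply mul_le_mul haa' hb'c (le_of_lt (lt_of_lt_of_le hb_pos hbb')) ha'0
        _ = c ^ n * a' * b := by ring
    calc (a / b) * P ≤ (c ^ n * (a' / b')) * P :=
          mul_le_mul_of_nonneg_right h1 hP0
      _ = c ^ n * ((a' / b') * P) := by ring
  -- definitions of MVol
  have hMB : MVol n B D = ((a / b) * P) ^ ((1:ℝ)/n) := rfl
  have hMK : MVol n K D = ((a' / b') * P) ^ ((1:ℝ)/n) := by
    rw [MVol, hpolar]
  have hcnn : ((c ^ n : ℝ)) ^ ((1:ℝ)/n) = c := by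
    rw [← Real.rpow_natCast c n, ← Real.rpow_mul hc0.le, mul_one_div,
      div_self (Nat.cast_ne_zero.mpr hn.ne' : (n:ℝ) ≠ 0), Real.rpow_one]
  have hABnn : 0 ≤ (a / b) * P := mul_nonneg (div_nonneg ENNReal.toReal_nonneg
    ENNReal.toReal_nonneg) hP0
  have hKDnn : 0 ≤ (a' / b') * P := mul_nonneg (div_nonneg ENNReal.toReal_nonneg
    ENNReal.toReal_nonneg) hP0
  have hstep : MVol n B D ≤ c * MVol n K D := by
    rw [hMB, hMK]
    calc ((a / b) * P) ^ ((1:ℝ)/n)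
        ≤ (c ^ n * ((a' / b') * P)) ^ ((1:ℝ)/n) :=
          Real.rpow_le_rpow hABnn hcore (by positivity)
      _ = ((c ^ n : ℝ)) ^ ((1:ℝ)/n) * (((a' / b') * P)) ^ ((1:ℝ)/n) :=
          Real.mul_rpow (pow_nonneg hc0.le n) hKDnn
      _ = c * ((a' / b') * P) ^ ((1:ℝ)/n) := by rw [hcnn]
  have hcbound : c ≤ 2 ^ ((1:ℝ)/p - 1) * (n : ℝ) ^ ((1:ℝ)/p - 1) := by
    rw [hc_def, ← Real.mul_rpow (by norm_num) (Nat.cast_nonneg n)]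
    apply Real.rpow_le_rpow (by positivity) _ he0
    have h1 : (1:ℝ) ≤ (n : ℝ) := by exact_mod_cast hn
    linarith
  have hMK0 : 0 ≤ MVol n K D := by
    rw [hMK]; exact Real.rpow_nonneg hKDnn _
  calc MVol n B D ≤ c * MVol n K D := hstep
    _ ≤ c * C := mul_le_mul_of_nonneg_left hMKD hc0.le
    _ ≤ (2 ^ ((1:ℝ)/p - 1) * (n : ℝ) ^ ((1:ℝ)/p - 1)) * C :=
        mul_le_mul_of_nonneg_right hcbound hC.le
    _ = C * 2 ^ ((1:ℝ)/p - 1) * (n : ℝ) ^ ((1:ℝ)/p - 1) := by ring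
end
end

section
/- Sharpness of the p-ball Milman ellipsoid bound: if f : ℕ → (0,∞) is a function such that for every n and every p-ball B ⊆ ℝⁿ there exists an ellipsoid D with M(B,D) ≤ f(n), then s(B) ≥ s(B_{ℓ₂ⁿ})/f(n) for every p-ball B; consequently, since s(B_{ℓₚⁿ}) ≤ C_p n^(−1/p) and s(B_{ℓ₂ⁿ}) ≥ c/n, one must have f(n) ≥ c_p · n^(1/p − 1). -/
open MeasureTheory Set Pointwise ENNReal

noncomputable section

namespace PB

open Matrix

variable {n : ℕ}

def cube (n : ℕ) (r : ℝ) : Set (Fin n → ℝ) := univ.pi fun _ => Icc (-r) r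

def ocube (n : ℕ) (r : ℝ) : Set (Fin n → ℝ) := univ.pi fun _ => Ioo (-r) r

lemma mem_cube {r : ℝ} {x : Fin n → ℝ} : x ∈ cube n r ↔ ∀ i, |x i| ≤ r := by
  simp only [cube, mem_pi, mem_univ, forall_true_left, mem_Icc, abs_lt, abs_le]

lemma mem_ocube {r : ℝ} {x : Fin n → ℝ} : x ∈ ocube n r ↔ ∀ i, |x i| < r := by
  simp only [ocube, mem_pi, mem_univ, forall_true_left, mem_Ioo, abs_lt, abs_le]

lemma ocube_subset_cube {r : ℝ} : ocube n r ⊆ cube n r := fun x hx =>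
  mem_cube.2 fun i => (mem_ocube.1 hx i).le

lemma isCompact_cube {r : ℝ} : IsCompact (cube n r) :=
  isCompact_univ_pi fun _ => isCompact_Icc

lemma isOpen_ocube {r : ℝ} : IsOpen (ocube n r) :=
  isOpen_set_pi finite_univ fun _ _ => isOpen_Ioo

lemma zero_mem_ocube {r : ℝ} (hr : 0 < r) : (0 : Fin n → ℝ) ∈ ocube n r := by
  simp [mem_ocube, hr]

lemma volume_cube {r : ℝ} : volume (cube n r) = (ENNReal.ofReal (2 * r)) ^ n := by
  rw [cube, volume_pi_pi]
  simp only [Real.volume_Icc, Finset.prod_const, Finset.card_univ, Fintype.card_fin]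
  congr 2
  ring

lemma volume_ocube {r : ℝ} : volume (ocube n r) = (ENNReal.ofReal (2 * r)) ^ n := by
  rw [ocube, volume_pi_pi]
  simp only [Real.volume_Ioo, Finset.prod_const, Finset.card_univ, Fintype.card_fin]
  congr 2
  ring

lemma volume_cube_lt_top {r : ℝ} : volume (cube n r) < ⊤ := by
  rw [volume_cube]; exact ENNReal.pow_lt_top ENNReal.ofReal_lt_top

lemma volume_ocube_pos {r : ℝ} (hr : 0 < r) : 0 < volume (ocube n r) := by
  rw [volume_ocube]
  exact ENNReal.pow_pos (ENNReal.ofReal_pos.2 (by linarith)) n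

-- polar basics
lemma zero_mem_polar {B : Set (Fin n → ℝ)} : (0 : Fin n → ℝ) ∈ polarSet n B := by
  intro y _; simp

lemma polar_mono {A B : Set (Fin n → ℝ)} (h : A ⊆ B) : polarSet n B ⊆ polarSet n A :=
  fun _ hx y hy => hx y (h hy)

lemma isClosed_polar {B : Set (Fin n → ℝ)} : IsClosed (polarSet n B) := by
  have : polarSet n B = ⋂ y ∈ B, {x : Fin n → ℝ | ∑ i, x i * y i ≤ 1} := by
    ext x; simp [polarSet]
  rw [this]
  refine isClosed_biInter fun y _ => isClosed_le ?_ continuous_const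
  exact continuous_finset_sum _ fun i _ => (continuous_apply i).mul continuous_const

lemma polar_subset_cube {B : Set (Fin n → ℝ)} {r : ℝ} (hr : 0 < r)
    (hc : ocube n r ⊆ B) : polarSet n B ⊆ cube n (2 / r) := by
  intro x hx
  refine mem_cube.2 fun i => ?_
  set s : ℝ := if 0 ≤ x i then 1 else -1 with hs
  have habs_s : |s| = 1 := by
    rcases le_or_gt 0 (x i) with h | h
    · simp [hs, h]
    · simp [hs, not_le.2 h]
  have hxs : x i * s = |x i| := by
    rcases le_or_gt 0 (x i) with h | h
    · simp [hs, h, abs_of_nonneg h]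
    · simp [hs, not_le.2 h, abs_of_neg h]
  set y : Fin n → ℝ := fun j => if j = i then r / 2 * s else 0 with hy
  have hyB : y ∈ B := by
    refine hc (mem_ocube.2 fun j => ?_)
    by_cases hj : j = i
    · rw [hy]; simp only [hj, if_true]
      rw [abs_mul, habs_s, mul_one, abs_of_pos (by linarith)]
      linarith
    · rw [hy]; simp [hj, hr]
  have hsum : ∑ j, x j * y j = x i * (r / 2 * s) := by
    rw [Finset.sum_eq_single i]
    · simp [hy]
    · intro j _ hj; simp [hy, hj]
    · simp
  have h1 : x i * (r / 2 * s) ≤ 1 := hsum ▸ hx y hyB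
  have h2 : r / 2 * |x i| ≤ 1 := by nlinarith [h1, hxs]
  rw [le_div_iff₀ hr]
  nlinarith [h2]

lemma cube_subset_polar {B : Set (Fin n → ℝ)} {R : ℝ} (hR : 0 < R)
    (hB : B ⊆ cube n R) : cube n (1 / (n * R + 1)) ⊆ polarSet n B := by
  intro x hx y hy
  have hden : (0:ℝ) < n * R + 1 := by positivity
  calc ∑ i, x i * y i ≤ ∑ i : Fin n, 1 / (n * R + 1) * R := by
        refine Finset.sum_le_sum fun i _ => ?_
        calc x i * y i ≤ |x i * y i| := le_abs_self _
          _ = |x i| * |y i| := abs_mul _ _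
          _ ≤ 1 / (n * R + 1) * R :=
            mul_le_mul (mem_cube.1 hx i) (mem_cube.1 (hB hy) i) (abs_nonneg _)
              (by positivity)
    _ = n * R / (n * R + 1) := by
        rw [Finset.sum_const, Finset.card_univ, Fintype.card_fin]; push_cast ; ring
    _ ≤ 1 := by rw [div_le_one hden]; linarith

lemma subset_cube_of_compact {B : Set (Fin n → ℝ)} (hB : IsCompact B) :
    ∃ R : ℝ, 0 < R ∧ B ⊆ cube n R := by
  obtain ⟨C, hC⟩ := hB.isBounded.exists_norm_le
  refine ⟨max C 1, lt_of_lt_of_le one_pos (le_max_right _ _), fun y hy => mem_cube.2 fun i => ?_⟩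
  calc |y i| = ‖y i‖ := rfl
    _ ≤ ‖y‖ := norm_le_pi_norm y i
    _ ≤ C := hC y hy
    _ ≤ max C 1 := le_max_left _ _

lemma exists_ocube_subset {B : Set (Fin n → ℝ)} (h : (0 : Fin n → ℝ) ∈ interior B) :
    ∃ r : ℝ, 0 < r ∧ ocube n r ⊆ B := by
  obtain ⟨ε, hε, hball⟩ := Metric.mem_nhds_iff.1 (mem_interior_iff_mem_nhds.1 h)
  refine ⟨ε, hε, fun x hx => ?_⟩
  refine hball ?_
  rw [Metric.mem_ball, dist_zero_right]
  exact (pi_norm_lt_iff hε).2 fun i => mem_ocube.1 hx i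

-- euclBall facts
lemma euclBall_subset_cube : euclBall n ⊆ cube n 1 := by
  intro x hx
  refine mem_cube.2 fun i => ?_
  rw [← sq_le_one_iff_abs_le_one]
  calc x i ^ 2 ≤ ∑ j, x j ^ 2 :=
        Finset.single_le_sum (fun j _ => sq_nonneg (x j)) (Finset.mem_univ i)
    _ ≤ 1 := hx

lemma isClosed_euclBall : IsClosed (euclBall n) :=
  isClosed_le (continuous_finset_sum _ fun i _ => (continuous_apply i).pow 2) continuous_const

lemma isCompact_euclBall : IsCompact (euclBall n) :=
  isCompact_cube.of_isClosed_subset isClosed_euclBall euclBall_subset_cube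

lemma ocube_subset_euclBall (hn : 0 < n) :
    ocube n (Real.sqrt (1 / n)) ⊆ euclBall n := by
  intro x hx
  have hn' : (0:ℝ) < n := by exact_mod_cast hn
  have : ∀ i, x i ^ 2 ≤ 1 / n := by
    intro i
    have h1 : |x i| ≤ Real.sqrt (1 / n) := (mem_ocube.1 hx i).le
    calc x i ^ 2 = |x i| ^ 2 := (sq_abs _).symm
      _ ≤ Real.sqrt (1 / n) ^ 2 := by
          exact pow_le_pow_left₀ (abs_nonneg _) h1 2
      _ = 1 / n := Real.sq_sqrt (by positivity)
  calc ∑ i, x i ^ 2 ≤ ∑ _i : Fin n, 1 / (n:ℝ) := Finset.sum_le_sum fun i _ => this i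
    _ = 1 := by
        rw [Finset.sum_const, Finset.card_univ, Fintype.card_fin, nsmul_eq_mul]
        field_simp

lemma volume_euclBall_lt_top : volume (euclBall n) < ⊤ :=
  lt_of_le_of_lt (measure_mono euclBall_subset_cube) volume_cube_lt_top

lemma volume_euclBall_pos (hn : 0 < n) : 0 < volume (euclBall n) :=
  lt_of_lt_of_le (volume_ocube_pos (Real.sqrt_pos.2 (by positivity)))
    (measure_mono (ocube_subset_euclBall hn))

-- polar of the Euclidean ball
lemma polar_euclBall : polarSet n (euclBall n) = euclBall n := by
  ext x
  constructor
  · intro hx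
    by_contra hS
    have hS1 : (1:ℝ) < ∑ i, x i ^ 2 := not_le.1 hS
    set S := ∑ i, x i ^ 2 with hSdef
    have hS0 : 0 < S := lt_trans one_pos hS1
    have hsq : 0 < Real.sqrt S := Real.sqrt_pos.2 hS0
    set y : Fin n → ℝ := fun i => x i / Real.sqrt S with hy
    have hyB : y ∈ euclBall n := by
      have : ∑ i, y i ^ 2 = S / S := by
        rw [hy]
        simp only [div_pow]
        rw [← Finset.sum_div, Real.sq_sqrt hS0.le]
      rw [euclBall, mem_setOf_eq, this, div_self hS0.ne']
    have hval : ∑ i, x i * y i = Real.sqrt S := by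
      rw [hy]
      simp only [mul_div_assoc']
      rw [← Finset.sum_div]
      rw [show ∑ i, x i * x i = S by rw [hSdef]; congr 1; ext i; ring]
      rw [div_eq_iff hsq.ne']
      exact (Real.mul_self_sqrt hS0.le).symm
    have hle : Real.sqrt S ≤ 1 := hval ▸ hx y hyB
    nlinarith [Real.sq_sqrt hS0.le, Real.sqrt_nonneg S]
  · intro hx y hy
    have h2 : (∑ i, x i * y i) ^ 2 ≤ (∑ i, x i ^ 2) * (∑ i, y i ^ 2) :=
      Finset.sum_mul_sq_le_sq_mul_sq Finset.univ x y
    have h3 : (∑ i, x i * y i) ^ 2 ≤ 1 :=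
      le_trans h2 (mul_le_one₀ hx (Finset.sum_nonneg fun i _ => sq_nonneg _) hy)
    nlinarith [le_abs_self (∑ i, x i * y i), sq_abs (∑ i, x i * y i),
      abs_nonneg (∑ i, x i * y i)]

lemma cube_mono {r r' : ℝ} (h : r ≤ r') : cube n r ⊆ cube n r' := fun x hx =>
  mem_cube.2 fun i => le_trans (mem_cube.1 hx i) h

lemma add_subset_cube {A B : Set (Fin n → ℝ)} {R S : ℝ}
    (hA : A ⊆ cube n R) (hB : B ⊆ cube n S) : A + B ⊆ cube n (R + S) := by
  rintro x ⟨a, ha, b, hb, rfl⟩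
  exact mem_cube.2 fun i =>
    le_trans (abs_add_le _ _) (add_le_add (mem_cube.1 (hA ha) i) (mem_cube.1 (hB hb) i))

lemma ellipsoid_isCompact {D : Set (Fin n → ℝ)} (hD : IsEllipsoid n D) : IsCompact D := by
  obtain ⟨u, rfl⟩ := hD
  exact isCompact_euclBall.image (LinearMap.continuous_of_finiteDimensional
    (u : (Fin n → ℝ) →ₗ[ℝ] (Fin n → ℝ)))

lemma zero_mem_interior_euclBall (hn : 0 < n) : (0 : Fin n → ℝ) ∈ interior (euclBall n) :=
  interior_maximal (ocube_subset_euclBall hn) isOpen_ocube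
    (zero_mem_ocube (Real.sqrt_pos.2 (by positivity)))

lemma zero_mem_interior_ellipsoid (hn : 0 < n) {D : Set (Fin n → ℝ)}
    (hD : IsEllipsoid n D) : (0 : Fin n → ℝ) ∈ interior D := by
  obtain ⟨u, rfl⟩ := hD
  set e := u.toContinuousLinearEquiv.toHomeomorph with he
  have hcoe : ⇑e = ⇑u := rfl
  have : interior (⇑u '' euclBall n) = ⇑u '' interior (euclBall n) := by
    rw [← hcoe, e.image_interior]
  rw [this]
  exact ⟨0, zero_mem_interior_euclBall hn, map_zero u⟩

lemma polar_ellipsoid (u : (Fin n → ℝ) ≃ₗ[ℝ] (Fin n → ℝ)) :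
    polarSet n (⇑u '' euclBall n) =
      (Matrix.toLin' (LinearMap.toMatrix' (u : (Fin n → ℝ) →ₗ[ℝ] (Fin n → ℝ)))ᵀ) ⁻¹'
        euclBall n := by
  set M := LinearMap.toMatrix' (u : (Fin n → ℝ) →ₗ[ℝ] (Fin n → ℝ)) with hM
  have hu : ∀ a, u a = M *ᵥ a := by
    intro a
    have : Matrix.toLin' M = (u : (Fin n → ℝ) →ₗ[ℝ] (Fin n → ℝ)) := by
      rw [hM, Matrix.toLin'_toMatrix']
    have h2 : Matrix.toLin' M a = u a := by rw [this]; rfl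
    rw [← h2, Matrix.toLin'_apply]
  ext x
  have key : ∀ a, (∑ i, x i * u a i) = ∑ i, (Mᵀ *ᵥ x) i * a i := by
    intro a
    have h1 : (∑ i, x i * u a i) = x ⬝ᵥ (M *ᵥ a) := by rw [hu a]; rfl
    have h2 : (∑ i, (Mᵀ *ᵥ x) i * a i) = (Mᵀ *ᵥ x) ⬝ᵥ a := rfl
    rw [h1, h2, Matrix.dotProduct_mulVec, Matrix.mulVec_transpose]
  constructor
  · intro hx
    have : Mᵀ *ᵥ x ∈ polarSet n (euclBall n) := by
      intro a ha
      rw [← key a]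
      exact hx _ ⟨a, ha, rfl⟩
    rw [polar_euclBall] at this
    simpa [Matrix.toLin'_apply] using this
  · intro hx
    rintro _ ⟨a, ha, rfl⟩
    rw [key a]
    have : Mᵀ *ᵥ x ∈ euclBall n := by simpa [Matrix.toLin'_apply] using hx
    rw [← polar_euclBall] at this
    exact this a ha

lemma ellipsoid_volume_prod {D : Set (Fin n → ℝ)} (hD : IsEllipsoid n D) :
    (volume D).toReal * (volume (polarSet n D)).toReal =
      (volume (euclBall n)).toReal ^ 2 := by
  obtain ⟨u, rfl⟩ := hD
  set M := LinearMap.toMatrix' (u : (Fin n → ℝ) →ₗ[ℝ] (Fin n → ℝ)) with hM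
  set d := LinearMap.det (u : (Fin n → ℝ) →ₗ[ℝ] (Fin n → ℝ)) with hd
  have hd0 : d ≠ 0 := u.isUnit_det'.ne_zero
  have hdet : LinearMap.det (Matrix.toLin' Mᵀ) = d := by
    rw [LinearMap.det_toLin', Matrix.det_transpose, hM, LinearMap.det_toMatrix']
  have h1 : volume (⇑u '' euclBall n) = ENNReal.ofReal |d| * volume (euclBall n) := by
    have := Measure.addHaar_image_linearMap (volume : Measure (Fin n → ℝ))
      (u : (Fin n → ℝ) →ₗ[ℝ] (Fin n → ℝ)) (euclBall n)
    simpa [hd] using this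
  have h2 : volume (polarSet n (⇑u '' euclBall n)) =
      ENNReal.ofReal |d|⁻¹ * volume (euclBall n) := by
    rw [polar_ellipsoid u]
    have := Measure.addHaar_preimage_linearMap (volume : Measure (Fin n → ℝ))
      (f := Matrix.toLin' Mᵀ) (by rw [hdet]; exact hd0) (euclBall n)
    rw [this, hdet, abs_inv]
  rw [h1, h2]
  rw [ENNReal.toReal_mul, ENNReal.toReal_mul, ENNReal.toReal_ofReal (abs_nonneg _),
    ENNReal.toReal_ofReal (by positivity)]
  have : |d| > 0 := abs_pos.2 hd0
  field_simp

lemma key_ineq {B D : Set (Fin n → ℝ)} (hBc : IsCompact B)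
    (hB0 : (0 : Fin n → ℝ) ∈ interior B) (hDc : IsCompact D)
    (hD0 : (0 : Fin n → ℝ) ∈ interior D)
    (hprod : (volume D).toReal * (volume (polarSet n D)).toReal =
      (volume (euclBall n)).toReal ^ 2) :
    ((volume (euclBall n)).toReal ^ 2) ^ ((1 : ℝ) / n) ≤ MVol n B D * sVol n B := by
  obtain ⟨RB, hRB, hBcube⟩ := subset_cube_of_compact hBc
  obtain ⟨RD, hRD, hDcube⟩ := subset_cube_of_compact hDc
  obtain ⟨rB, hrB, hBo⟩ := exists_ocube_subset hB0
  obtain ⟨rD, hrD, hDo⟩ := exists_ocube_subset hD0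
  -- abbreviations
  set a := (volume (B ∩ D)).toReal with ha_def
  set a' := (volume (polarSet n B ∩ polarSet n D)).toReal with ha'_def
  set b := (volume (B + D)).toReal with hb_def
  set b' := (volume (polarSet n B + polarSet n D)).toReal with hb'_def
  set vB := (volume B).toReal with hvB_def
  set vB' := (volume (polarSet n B)).toReal with hvB'_def
  -- finiteness
  have hBfin : volume B < ⊤ := lt_of_le_of_lt (measure_mono hBcube) volume_cube_lt_top
  have hDfin : volume D < ⊤ := lt_of_le_of_lt (measure_mono hDcube) volume_cube_lt_top
  have hBpolar_cube : polarSet n B ⊆ cube n (2 / rB) := polar_subset_cube hrB hBo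
  have hDpolar_cube : polarSet n D ⊆ cube n (2 / rD) := polar_subset_cube hrD hDo
  have hB'fin : volume (polarSet n B) < ⊤ :=
    lt_of_le_of_lt (measure_mono hBpolar_cube) volume_cube_lt_top
  have hD'fin : volume (polarSet n D) < ⊤ :=
    lt_of_le_of_lt (measure_mono hDpolar_cube) volume_cube_lt_top
  have hsum_fin : volume (B + D) < ⊤ :=
    lt_of_le_of_lt (measure_mono (add_subset_cube hBcube hDcube)) volume_cube_lt_top
  have hsum'_fin : volume (polarSet n B + polarSet n D) < ⊤ :=
    lt_of_le_of_lt (measure_mono (add_subset_cube hBpolar_cube hDpolar_cube))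
      volume_cube_lt_top
  -- positivity of intersections
  have hcap_pos : 0 < volume (B ∩ D) := by
    refine lt_of_lt_of_le (volume_ocube_pos (lt_min hrB hrD)) (measure_mono ?_)
    intro x hx
    exact ⟨hBo (mem_ocube.2 fun i => lt_of_lt_of_le (mem_ocube.1 hx i) (min_le_left _ _)),
      hDo (mem_ocube.2 fun i => lt_of_lt_of_le (mem_ocube.1 hx i) (min_le_right _ _))⟩
  have hcap'_pos : 0 < volume (polarSet n B ∩ polarSet n D) := by
    set ρ := min (1 / (n * RB + 1)) (1 / (n * RD + 1)) with hρ
    have hρpos : 0 < ρ := lt_min (by positivity) (by positivity)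
    refine lt_of_lt_of_le (volume_ocube_pos hρpos) (measure_mono ?_)
    intro x hx
    have hx' : x ∈ cube n ρ := ocube_subset_cube hx
    constructor
    · exact cube_subset_polar hRB hBcube (cube_mono (min_le_left _ _) hx')
    · exact cube_subset_polar hRD hDcube (cube_mono (min_le_right _ _) hx')
  have ha : 0 < a := ENNReal.toReal_pos hcap_pos.ne'
    (lt_of_le_of_lt (measure_mono inter_subset_left) hBfin).ne
  have ha' : 0 < a' := ENNReal.toReal_pos hcap'_pos.ne'
    (lt_of_le_of_lt (measure_mono inter_subset_left) hB'fin).ne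
  -- D ⊆ B + D and D° ⊆ B° + D°
  have hDsub : D ⊆ B + D := fun d hd => by
    have := Set.add_mem_add (interior_subset hB0) hd
    simpa using this
  have hD'sub : polarSet n D ⊆ polarSet n B + polarSet n D := fun d hd => by
    have := Set.add_mem_add (zero_mem_polar (B := B)) hd
    simpa using this
  have hDb : (volume D).toReal ≤ b :=
    ENNReal.toReal_mono hsum_fin.ne (measure_mono hDsub)
  have hDb' : (volume (polarSet n D)).toReal ≤ b' :=
    ENNReal.toReal_mono hsum'_fin.ne (measure_mono hD'sub)
  have havB : a ≤ vB := ENNReal.toReal_mono hBfin.ne (measure_mono inter_subset_left)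
  have havB' : a' ≤ vB' := ENNReal.toReal_mono hB'fin.ne (measure_mono inter_subset_left)
  -- the real-number chain
  have hX : (0:ℝ) ≤ b / a * (b' / a') := by positivity
  have hchain : (volume (euclBall n)).toReal ^ 2 ≤ (b / a * (b' / a')) * (vB * vB') := by
    calc (volume (euclBall n)).toReal ^ 2
        = (volume D).toReal * (volume (polarSet n D)).toReal := hprod.symm
      _ ≤ b * b' := by
          apply mul_le_mul hDb hDb' ENNReal.toReal_nonneg
          exact le_trans ENNReal.toReal_nonneg hDb
      _ = (b / a * (b' / a')) * (a * a') := by field_simp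
      _ ≤ (b / a * (b' / a')) * (vB * vB') := by
          apply mul_le_mul_of_nonneg_left _ hX
          exact mul_le_mul havB havB' ha'.le (le_trans ha.le havB)
  calc ((volume (euclBall n)).toReal ^ 2) ^ ((1:ℝ)/n)
      ≤ ((b / a * (b' / a')) * (vB * vB')) ^ ((1:ℝ)/n) :=
        Real.rpow_le_rpow (sq_nonneg _) hchain (by positivity)
    _ = MVol n B D * sVol n B := by
        rw [Real.mul_rpow hX (by positivity)]
        rfl

-- one-dimensional integrals
lemma integrable_comp_abs' {g : ℝ → ℝ} (hg : IntegrableOn (fun x => g |x|) (Ioi 0)) :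
    Integrable fun x : ℝ => g |x| := by
  have int_Iic : IntegrableOn (fun x => g |x|) (Iic 0) := by
    rw [← Measure.map_neg_eq_self (volume : Measure ℝ)]
    have m : MeasurableEmbedding fun x : ℝ => -x := (Homeomorph.neg ℝ).measurableEmbedding
    rw [m.integrableOn_map_iff]
    simp_rw [Function.comp_def, abs_neg, neg_preimage, neg_Iic, neg_zero]
    exact Iff.mpr integrableOn_Ici_iff_integrableOn_Ioi hg
  have := int_Iic.union hg
  rwa [Iic_union_Ioi, integrableOn_univ] at this

lemma integrableOn_exp_neg_mul_rpow {p b : ℝ} (hp : 0 < p) (hb : 0 < b) :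
    IntegrableOn (fun x : ℝ => Real.exp (-(b * x ^ p))) (Ioi 0) := by
  have h1 : IntegrableOn (fun y : ℝ => Real.exp (-y) * y ^ (1 / p - 1)) (Ioi 0) :=
    Real.GammaIntegral_convergent (by positivity)
  have h2 : IntegrableOn (fun y : ℝ => Real.exp (-(b * y)) * (b * y) ^ (1 / p - 1)) (Ioi 0) := by
    have h := (integrableOn_Ioi_comp_mul_left_iff
      (fun y : ℝ => Real.exp (-y) * y ^ (1 / p - 1)) 0 hb).2
    rw [mul_zero] at h
    exact h h1
  have h3 : IntegrableOn (fun y : ℝ => Real.exp (-(b * y)) * y ^ (1 / p - 1)) (Ioi 0) := by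
    have hc : (0:ℝ) < b ^ (1 / p - 1) := Real.rpow_pos_of_pos hb _
    have h : IntegrableOn
        (fun y : ℝ => (b ^ (1 / p - 1))⁻¹ * (Real.exp (-(b * y)) * (b * y) ^ (1 / p - 1)))
        (Ioi 0) := h2.const_mul ((b ^ (1 / p - 1))⁻¹)
    refine h.congr_fun (fun y hy => ?_) measurableSet_Ioi
    dsimp only
    rw [Real.mul_rpow hb.le (le_of_lt hy)]
    field_simp
  have h4 := (integrableOn_Ioi_comp_rpow_iff'
    (fun y : ℝ => Real.exp (-(b * y)) * y ^ (1 / p - 1)) hp.ne').2 h3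
  refine h4.congr_fun (fun x hx => ?_) measurableSet_Ioi
  have hx0 : (0:ℝ) < x := hx
  have e1 : ((x:ℝ) ^ p) ^ (1 / p - 1) = x ^ (1 - p) := by
    rw [← Real.rpow_mul hx0.le]
    congr 1
    field_simp
  dsimp only
  rw [smul_eq_mul, e1]
  rw [show x ^ (p - 1) * (Real.exp (-(b * x ^ p)) * x ^ (1 - p)) =
      Real.exp (-(b * x ^ p)) * (x ^ (p - 1) * x ^ (1 - p)) by ring,
    ← Real.rpow_add hx0]
  norm_num

lemma integrable_exp_neg_mul_abs_rpow {p b : ℝ} (hp : 0 < p) (hb : 0 < b) :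
    Integrable fun x : ℝ => Real.exp (-(b * |x| ^ p)) := by
  refine integrable_comp_abs' (g := fun y => Real.exp (-(b * y ^ p))) ?_
  exact (integrableOn_exp_neg_mul_rpow hp hb).congr_fun
    (fun x hx => by rw [abs_of_pos (by exact hx)]) measurableSet_Ioi

lemma integral_exp_neg_mul_abs_rpow {p b : ℝ} (hp : 0 < p) (hb : 0 < b) :
    ∫ x : ℝ, Real.exp (-(b * |x| ^ p)) =
      b ^ (-(1:ℝ) / p) * (2 * (1 / p) * Real.Gamma (1 / p)) := by
  rw [integral_comp_abs (f := fun x => Real.exp (-(b * x ^ p)))]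
  have h := integral_rpow_mul_exp_neg_mul_rpow hp (by norm_num : (-1:ℝ) < 0) hb
  simp only [Real.rpow_zero, one_mul, zero_add, neg_mul] at h ⊢
  rw [h]
  ring

-- the ℓ_p ball
def lpBall (n : ℕ) (p : ℝ) : Set (Fin n → ℝ) := {x | ∑ i, |x i| ^ p ≤ 1}

variable {p : ℝ}

lemma lpBall_subset_cube (hp : 0 < p) : lpBall n p ⊆ cube n 1 := by
  intro x hx
  refine mem_cube.2 fun i => ?_
  by_contra hgt
  push_neg at hgt
  have h1 : (1:ℝ) < |x i| ^ p :=
    (Real.one_lt_rpow_iff_of_pos (lt_trans one_pos hgt)).2 (Or.inl ⟨hgt, hp⟩)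
  have h2 : |x i| ^ p ≤ ∑ j, |x j| ^ p :=
    Finset.single_le_sum (fun j _ => Real.rpow_nonneg (abs_nonneg _) _) (Finset.mem_univ i)
  exact absurd (le_trans h2 hx) (by linarith)

lemma isClosed_lpBall (hp : 0 < p) : IsClosed (lpBall n p) := by
  refine isClosed_le (continuous_finset_sum _ fun i _ => ?_) continuous_const
  exact Continuous.rpow_const (continuous_apply i).abs fun x => Or.inr hp.le

lemma isCompact_lpBall (hp : 0 < p) : IsCompact (lpBall n p) :=
  isCompact_cube.of_isClosed_subset (isClosed_lpBall hp) (lpBall_subset_cube hp)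

lemma real_rpow_add_le {a b : ℝ} (ha : 0 ≤ a) (hb : 0 ≤ b) (hp : 0 ≤ p) (hp1 : p ≤ 1) :
    (a + b) ^ p ≤ a ^ p + b ^ p := by
  have key := NNReal.rpow_add_le_add_rpow a.toNNReal b.toNNReal hp hp1
  have h2 := NNReal.coe_le_coe.2 key
  push_cast at h2
  rwa [Real.coe_toNNReal a ha, Real.coe_toNNReal b hb] at h2

lemma lpBall_isPBall (hp : 0 < p) (hp1 : p < 1) :
    IsCompact (lpBall n p) ∧ lpBall n p = -lpBall n p ∧
      (0 : Fin n → ℝ) ∈ interior (lpBall n p) ∧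
      ∀ x ∈ lpBall n p, ∀ y ∈ lpBall n p, ∀ l m : ℝ, 0 ≤ l → 0 ≤ m →
        l ^ p + m ^ p = 1 → l • x + m • y ∈ lpBall n p := by
  refine ⟨isCompact_lpBall hp, ?_, ?_, ?_⟩
  · ext x
    simp only [Set.mem_neg, lpBall, mem_setOf_eq, Pi.neg_apply, abs_neg]
  · set r : ℝ := (1 / (n + 1 : ℝ)) ^ ((1:ℝ) / p) with hr
    have hrpos : 0 < r := Real.rpow_pos_of_pos (by positivity) _
    refine interior_maximal ?_ isOpen_ocube (zero_mem_ocube hrpos)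
    intro x hx
    have hterm : ∀ i, |x i| ^ p ≤ (1:ℝ) / ((n:ℝ) + 1) := by
      intro i
      have h1 : |x i| ≤ r := (mem_ocube.1 hx i).le
      calc |x i| ^ p ≤ r ^ p := Real.rpow_le_rpow (abs_nonneg _) h1 hp.le
        _ = (1:ℝ) / ((n:ℝ) + 1) := by
            rw [hr, ← Real.rpow_mul (by positivity), one_div_mul_cancel hp.ne', Real.rpow_one]
    calc ∑ i, |x i| ^ p ≤ ∑ _i : Fin n, ((1:ℝ) / ((n:ℝ) + 1)) :=
          Finset.sum_le_sum fun i _ => hterm i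
      _ = (n:ℝ) / ((n:ℝ) + 1) := by
          rw [Finset.sum_const, Finset.card_univ, Fintype.card_fin, nsmul_eq_mul]
          ring
      _ ≤ 1 := by
          rw [div_le_one (by positivity)]
          linarith
  · intro x hx y hy l m hl hm hlm
    have key : ∀ i, |l * x i + m * y i| ^ p ≤ l ^ p * |x i| ^ p + m ^ p * |y i| ^ p := by
      intro i
      calc |l * x i + m * y i| ^ p ≤ (|l * x i| + |m * y i|) ^ p :=
            Real.rpow_le_rpow (abs_nonneg _) (abs_add_le _ _) hp.le
        _ ≤ |l * x i| ^ p + |m * y i| ^ p :=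
            real_rpow_add_le (abs_nonneg _) (abs_nonneg _) hp.le hp1.le
        _ = l ^ p * |x i| ^ p + m ^ p * |y i| ^ p := by
            rw [abs_mul, abs_mul, abs_of_nonneg hl, abs_of_nonneg hm,
              Real.mul_rpow hl (abs_nonneg _), Real.mul_rpow hm (abs_nonneg _)]
    have hxp : 0 ≤ ∑ i, |x i| ^ p :=
      Finset.sum_nonneg fun i _ => Real.rpow_nonneg (abs_nonneg _) _
    have hyp : 0 ≤ ∑ i, |y i| ^ p :=
      Finset.sum_nonneg fun i _ => Real.rpow_nonneg (abs_nonneg _) _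
    calc ∑ i, |(l • x + m • y) i| ^ p = ∑ i, |l * x i + m * y i| ^ p := by
          simp [Pi.add_apply, Pi.smul_apply, smul_eq_mul]
      _ ≤ ∑ i, (l ^ p * |x i| ^ p + m ^ p * |y i| ^ p) :=
          Finset.sum_le_sum fun i _ => key i
      _ = l ^ p * ∑ i, |x i| ^ p + m ^ p * ∑ i, |y i| ^ p := by
          rw [Finset.sum_add_distrib, Finset.mul_sum, Finset.mul_sum]
      _ ≤ l ^ p * 1 + m ^ p * 1 := by
          have hl' : (0:ℝ) ≤ l ^ p := Real.rpow_nonneg hl _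
          have hm' : (0:ℝ) ≤ m ^ p := Real.rpow_nonneg hm _
          exact add_le_add (mul_le_mul_of_nonneg_left hx hl')
            (mul_le_mul_of_nonneg_left hy hm')
      _ = 1 := by rw [mul_one, mul_one, hlm]

lemma polar_lpBall_subset (hp : 0 < p) : polarSet n (lpBall n p) ⊆ cube n 1 := by
  intro x hx
  refine mem_cube.2 fun i => ?_
  set s : ℝ := if 0 ≤ x i then 1 else -1 with hs
  have habs_s : |s| = 1 := by
    rcases le_or_gt 0 (x i) with h | h
    · simp [hs, h]
    · simp [hs, not_le.2 h]
  have hxs : x i * s = |x i| := by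
    rcases le_or_gt 0 (x i) with h | h
    · simp [hs, h, abs_of_nonneg h]
    · simp [hs, not_le.2 h, abs_of_neg h]
  set y : Fin n → ℝ := fun j => if j = i then s else 0 with hy
  have hyB : y ∈ lpBall n p := by
    show ∑ j, |y j| ^ p ≤ 1
    rw [Finset.sum_eq_single i]
    · simp only [hy, if_true]
      rw [habs_s, Real.one_rpow]
    · intro j _ hj
      simp only [hy, if_neg hj, abs_zero]
      exact Real.zero_rpow hp.ne'
    · simp
  have hsum : ∑ j, x j * y j = x i * s := by
    rw [Finset.sum_eq_single i]
    · simp [hy]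
    · intro j _ hj; simp [hy, hj]
    · simp
  have := hx y hyB
  rw [hsum, hxs] at this
  exact this

lemma lpBall_volume_bound (hp : 0 < p) (hn : 0 < n) :
    (volume (lpBall n p)).toReal ≤
      (Real.exp (1 / p) *
        (((n:ℝ) / p) ^ (-(1:ℝ) / p) * (2 * (1 / p) * Real.Gamma (1 / p)))) ^ n := by
  set b : ℝ := (n : ℝ) / p with hb_def
  have hb : 0 < b := by positivity
  set g : ℝ → ℝ := fun t => Real.exp (1 / p - b * |t| ^ p) with hg_def
  have hg_eq : g = fun t => Real.exp (1 / p) * Real.exp (-(b * |t| ^ p)) := by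
    funext t
    rw [hg_def, ← Real.exp_add]
    ring_nf
  have hg_int : Integrable g := by
    rw [hg_eq]
    exact (integrable_exp_neg_mul_abs_rpow hp hb).const_mul _
  have hprod_int : Integrable fun x : Fin n → ℝ => ∏ i, g (x i) :=
    Integrable.fintype_prod fun _ => hg_int
  have hmeas : MeasurableSet (lpBall n p) := (isClosed_lpBall hp).measurableSet
  have hfin : volume (lpBall n p) < ⊤ :=
    lt_of_le_of_lt (measure_mono (lpBall_subset_cube hp)) volume_cube_lt_top
  have hind_int : Integrable ((lpBall n p).indicator fun _ => (1:ℝ)) := by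
    rw [integrable_indicator_iff hmeas]
    exact integrableOn_const hfin.ne
  have hpt : ∀ x : Fin n → ℝ,
      (lpBall n p).indicator (fun _ => (1:ℝ)) x ≤ ∏ i, g (x i) := by
    intro x
    have hprod_eq : ∏ i, g (x i) = Real.exp ((n : ℝ) / p - b * ∑ i, |x i| ^ p) := by
      rw [hg_def, ← Real.exp_sum]
      congr 1
      rw [Finset.sum_sub_distrib, Finset.sum_const, Finset.card_univ, Fintype.card_fin,
        nsmul_eq_mul, ← Finset.mul_sum]
      ring
    by_cases hx : x ∈ lpBall n p
    · rw [indicator_of_mem hx, hprod_eq]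
      rw [show (1:ℝ) = Real.exp 0 by rw [Real.exp_zero]]
      apply Real.exp_le_exp.2
      have : ∑ i, |x i| ^ p ≤ 1 := hx
      nlinarith [this, hb]
    · rw [indicator_of_notMem hx, hprod_eq]
      positivity
  have h1 : (volume (lpBall n p)).toReal ≤ ∫ x : Fin n → ℝ, ∏ i, g (x i) := by
    change volume.real (lpBall n p) ≤ _
    rw [← integral_indicator_one hmeas]
    exact integral_mono hind_int hprod_int hpt
  have h2 : ∫ x : Fin n → ℝ, ∏ i, g (x i) = (∫ t : ℝ, g t) ^ n := by
    rw [volume_pi, integral_fintype_prod_eq_pow (ι := Fin n) g, Fintype.card_fin]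
  have h3 : ∫ t : ℝ, g t =
      Real.exp (1 / p) * (b ^ (-(1:ℝ) / p) * (2 * (1 / p) * Real.Gamma (1 / p))) := by
    rw [hg_eq, integral_const_mul, integral_exp_neg_mul_abs_rpow hp hb]
  rw [h3] at h2
  rw [h2] at h1
  exact h1

lemma polar_lpBall_volume (hp : 0 < p) :
    (volume (polarSet n (lpBall n p))).toReal ≤ 2 ^ n := by
  have h1 : volume (polarSet n (lpBall n p)) ≤ volume (cube n 1) :=
    measure_mono (polar_lpBall_subset hp)
  have h2 : (volume (cube n (1:ℝ))).toReal = 2 ^ n := by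
    rw [volume_cube, ENNReal.toReal_pow, ENNReal.toReal_ofReal (by norm_num)]
    norm_num
  calc (volume (polarSet n (lpBall n p))).toReal
      ≤ (volume (cube n (1:ℝ))).toReal := ENNReal.toReal_mono volume_cube_lt_top.ne h1
    _ = 2 ^ n := h2

lemma euclBall_rpow_lower (hn : 0 < n) :
    4 / (n:ℝ) ≤ ((volume (euclBall n)).toReal ^ 2) ^ ((1:ℝ) / n) := by
  have hn' : (0:ℝ) < n := by exact_mod_cast hn
  set a : ℝ := 2 * Real.sqrt (1 / n) with ha_def
  have ha : 0 < a := by positivity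
  have h1 : a ^ n ≤ (volume (euclBall n)).toReal := by
    have hvol : volume (ocube n (Real.sqrt (1 / n))) ≤ volume (euclBall n) :=
      measure_mono (ocube_subset_euclBall hn)
    have := ENNReal.toReal_mono volume_euclBall_lt_top.ne hvol
    rwa [volume_ocube, ENNReal.toReal_pow, ENNReal.toReal_ofReal (by positivity)] at this
  have hsq : a ^ 2 = 4 / n := by
    rw [ha_def, mul_pow, Real.sq_sqrt (by positivity)]
    ring
  have h2 : (a ^ 2) ^ n ≤ (volume (euclBall n)).toReal ^ 2 := by
    calc (a ^ 2) ^ n = (a ^ n) ^ 2 := by rw [← pow_mul, ← pow_mul, Nat.mul_comm]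
      _ ≤ (volume (euclBall n)).toReal ^ 2 :=
          pow_le_pow_left₀ (pow_nonneg ha.le n) h1 2
  calc 4 / (n:ℝ) = ((a ^ 2) ^ n) ^ ((1:ℝ) / n) := by
        rw [← Real.rpow_natCast (a ^ 2) n, ← Real.rpow_mul (sq_nonneg a),
          mul_one_div_cancel (ne_of_gt hn'), Real.rpow_one, hsq]
    _ ≤ ((volume (euclBall n)).toReal ^ 2) ^ ((1:ℝ) / n) :=
        Real.rpow_le_rpow (by positivity) h2 (by positivity)

end PB

/-- Sharpness of the `p`-ball Milman-ellipsoid bound: if every `p`-ball in `ℝⁿ` admits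
an ellipsoid `D` with `M(B,D) ≤ f(n)`, then `s(B) ≥ s(B_{ℓ₂ⁿ})/f(n)` for every `p`-ball
`B`, and consequently `f(n) ≥ c_p · n^(1/p - 1)` for some `c_p > 0`. -/
theorem pBall_milman_ellipsoid_sharp (p : ℝ) (hp : 0 < p) (hp1 : p < 1)
    (f : ℕ → ℝ) (hf : ∀ n, 0 < f n)
    (h : ∀ n : ℕ, 0 < n → ∀ B : Set (Fin n → ℝ), IsPBall n p B →
      ∃ D : Set (Fin n → ℝ), IsEllipsoid n D ∧ MVol n B D ≤ f n) :
    (∀ n : ℕ, 0 < n → ∀ B : Set (Fin n → ℝ), IsPBall n p B →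
      ((volume (euclBall n)).toReal ^ 2) ^ ((1 : ℝ) / n) / f n ≤ sVol n B) ∧
    ∃ c : ℝ, 0 < c ∧ ∀ n : ℕ, 0 < n → c * (n : ℝ) ^ ((1 : ℝ) / p - 1) ≤ f n := by
  have part1 : ∀ n : ℕ, 0 < n → ∀ B : Set (Fin n → ℝ), IsPBall n p B →
      ((volume (euclBall n)).toReal ^ 2) ^ ((1 : ℝ) / n) / f n ≤ sVol n B := by
    intro n hn B hB
    obtain ⟨D, hD, hM⟩ := h n hn B hB
    have hkey := PB.key_ineq (n := n) hB.1 hB.2.2.1 (PB.ellipsoid_isCompact hD)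
      (PB.zero_mem_interior_ellipsoid hn hD) (PB.ellipsoid_volume_prod hD)
    have hs : 0 ≤ sVol n B := Real.rpow_nonneg (by positivity) _
    have hx : ((volume (euclBall n)).toReal ^ 2) ^ ((1 : ℝ) / n) ≤ sVol n B * f n := by
      calc ((volume (euclBall n)).toReal ^ 2) ^ ((1 : ℝ) / n)
          ≤ MVol n B D * sVol n B := hkey
        _ ≤ f n * sVol n B := mul_le_mul_of_nonneg_right hM hs
        _ = sVol n B * f n := mul_comm _ _
    rw [div_le_iff₀ (hf n)]
    exact hx
  refine ⟨part1, ?_⟩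
  set C : ℝ := Real.exp (1 / p) * (p ^ ((1:ℝ) / p) * (2 * (1 / p) * Real.Gamma (1 / p)))
    with hC
  have hΓ : 0 < Real.Gamma (1 / p) := Real.Gamma_pos_of_pos (by positivity)
  have hC0 : 0 < C := by
    have h1 : (0:ℝ) < p ^ ((1:ℝ) / p) := Real.rpow_pos_of_pos hp _
    have h2 : (0:ℝ) < Real.exp (1 / p) := Real.exp_pos _
    positivity
  refine ⟨2 / C, by positivity, ?_⟩
  intro n hn
  have hn' : (0:ℝ) < n := by exact_mod_cast hn
  have hpb : IsPBall n p (PB.lpBall n p) := PB.lpBall_isPBall hp hp1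
  have h1 := part1 n hn _ hpb
  have hnp : (0:ℝ) < (n:ℝ) ^ (-(1:ℝ) / p) := Real.rpow_pos_of_pos hn' _
  have hbase : Real.exp (1 / p) *
      (((n:ℝ) / p) ^ (-(1:ℝ) / p) * (2 * (1 / p) * Real.Gamma (1 / p)))
      = C * (n:ℝ) ^ (-(1:ℝ) / p) := by
    have e1 : ((n:ℝ) / p) ^ (-(1:ℝ) / p) = (n:ℝ) ^ (-(1:ℝ) / p) * p ^ ((1:ℝ) / p) := by
      rw [Real.div_rpow hn'.le hp.le, div_eq_mul_inv, ← Real.rpow_neg hp.le]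
      congr 1
      ring
    rw [e1, hC]
    ring
  have hsvol : sVol n (PB.lpBall n p) ≤ 2 * C * (n:ℝ) ^ (-(1:ℝ) / p) := by
    have hv1 := PB.lpBall_volume_bound (n := n) hp hn
    rw [hbase] at hv1
    have hv2 := PB.polar_lpBall_volume (n := n) (p := p) hp
    have hnn2 : (0:ℝ) ≤ (volume (polarSet n (PB.lpBall n p))).toReal := ENNReal.toReal_nonneg
    have hmul : (volume (PB.lpBall n p)).toReal *
        (volume (polarSet n (PB.lpBall n p))).toReal
        ≤ (2 * C * (n:ℝ) ^ (-(1:ℝ) / p)) ^ n := by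
      calc (volume (PB.lpBall n p)).toReal * (volume (polarSet n (PB.lpBall n p))).toReal
          ≤ (C * (n:ℝ) ^ (-(1:ℝ) / p)) ^ n * 2 ^ n :=
            mul_le_mul hv1 hv2 hnn2 (by positivity)
        _ = (2 * C * (n:ℝ) ^ (-(1:ℝ) / p)) ^ n := by
            rw [← mul_pow]
            congr 1
            ring
    show ((volume (PB.lpBall n p)).toReal *
        (volume (polarSet n (PB.lpBall n p))).toReal) ^ ((1:ℝ) / n)
        ≤ 2 * C * (n:ℝ) ^ (-(1:ℝ) / p)
    calc ((volume (PB.lpBall n p)).toReal *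
        (volume (polarSet n (PB.lpBall n p))).toReal) ^ ((1:ℝ) / n)
        ≤ ((2 * C * (n:ℝ) ^ (-(1:ℝ) / p)) ^ n) ^ ((1:ℝ) / n) :=
          Real.rpow_le_rpow (by positivity) hmul (by positivity)
      _ = 2 * C * (n:ℝ) ^ (-(1:ℝ) / p) := by
          rw [← Real.rpow_natCast (2 * C * (n:ℝ) ^ (-(1:ℝ) / p)) n,
            ← Real.rpow_mul (by positivity), mul_one_div_cancel (ne_of_gt hn'),
            Real.rpow_one]
  have h3 : 4 / (n:ℝ) ≤ f n * (2 * C * (n:ℝ) ^ (-(1:ℝ) / p)) := by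
    rw [div_le_iff₀ (hf n)] at h1
    calc (4:ℝ) / n ≤ ((volume (euclBall n)).toReal ^ 2) ^ ((1:ℝ) / n) :=
          PB.euclBall_rpow_lower hn
      _ ≤ sVol n (PB.lpBall n p) * f n := h1
      _ ≤ (2 * C * (n:ℝ) ^ (-(1:ℝ) / p)) * f n :=
          mul_le_mul_of_nonneg_right hsvol (hf n).le
      _ = f n * (2 * C * (n:ℝ) ^ (-(1:ℝ) / p)) := mul_comm _ _
  have hfinal : (2 / C) * (n:ℝ) ^ ((1:ℝ) / p - 1) =
      (4 / (n:ℝ)) / (2 * C * (n:ℝ) ^ (-(1:ℝ) / p)) := by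
    rw [Real.rpow_sub hn', Real.rpow_one, neg_div, Real.rpow_neg hn'.le]
    have hr : (0:ℝ) < (n:ℝ) ^ ((1:ℝ) / p) := Real.rpow_pos_of_pos hn' _
    field_simp
    ring
  rw [hfinal, div_le_iff₀ (mul_pos (mul_pos two_pos hC0) hnp)]
  exact h3
end
end
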